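/- arXiv:2310.15803 — 13 statements merged into one kernel-verified Lean document; each statement's English description precedes it below -/
import Mathlib

section
/- The pair k1 = (βs/βb)·(−δ2)/(1 − δ2) and C2 = (βs/(1 − δ2))^{1−δ2} · (βb/(−δ2))^{δ2} satisfies the smooth-fit conditions βs − βb·k1 = C2·k1^{δ2} and −βb = C2·δ2·k1^{δ2−1}. -/
/-!
With `A = βs / (1 - δ2)` and `B = βb / (-δ2)`, both positive because `δ2 < 0`, the threshold is
`k1 = A / B` and the constant is `C2 = A ^ (1 - δ2) * B ^ δ2`. Splitting the powers of `A / B`,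
`C2 * k1 ^ δ2 = A` and `C2 * k1 ^ (δ2 - 1) = B`, while `βs - βb * k1 = βs + δ2 * A = A` and
`δ2 * B = -βb`.
-/

open Real

theorem lt_sqrt_sq_add {t c : ℝ} (hc : 0 < c) : t < √(t ^ 2 + c) := by
  rcases le_or_gt 0 t with ht | ht
  · exact (lt_sqrt ht).mpr (by linarith)
  · exact ht.trans_le (sqrt_nonneg _)

section RpowSplit

variable {A B : ℝ} (hA : 0 < A) (hB : 0 < B) (p : ℝ)
include hA hB

theorem rpow_one_sub_mul_rpow_mul_div_rpow_self :
    A ^ (1 - p) * B ^ p * (A / B) ^ p = A := by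
  rw [div_rpow hA.le hB.le, mul_assoc, mul_div_cancel₀ _ (rpow_pos_of_pos hB p).ne',
    ← rpow_add hA, sub_add_cancel, rpow_one]

theorem rpow_one_sub_mul_rpow_mul_div_rpow_sub_one :
    A ^ (1 - p) * B ^ p * (A / B) ^ (p - 1) = B := by
  rw [div_rpow hA.le hB.le, ← mul_div_assoc, mul_right_comm, ← rpow_add hA,
    show 1 - p + (p - 1) = 0 by ring, rpow_zero, one_mul, ← rpow_sub hB, sub_sub_cancel,
    rpow_one]

end RpowSplit

theorem smooth_fit_of_neg {a b δ : ℝ} (ha : 0 < a) (hb : 0 < b) (hδ : δ < 0) :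
    a - b * ((a / b) * (-δ) / (1 - δ))
        = (a / (1 - δ)) ^ (1 - δ) * (b / (-δ)) ^ δ * ((a / b) * (-δ) / (1 - δ)) ^ δ ∧
      -b = (a / (1 - δ)) ^ (1 - δ) * (b / (-δ)) ^ δ * δ
        * ((a / b) * (-δ) / (1 - δ)) ^ (δ - 1) := by
  have hA : 0 < a / (1 - δ) := div_pos ha (by linarith)
  have hB : 0 < b / (-δ) := div_pos hb (by linarith)
  have hk : (a / b) * (-δ) / (1 - δ) = (a / (1 - δ)) / (b / (-δ)) := by
    field_simp
  rw [hk, rpow_one_sub_mul_rpow_mul_div_rpow_self hA hB, mul_right_comm _ δ,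
    rpow_one_sub_mul_rpow_mul_div_rpow_sub_one hA hB]
  have h1 : 1 - δ ≠ 0 := by linarith
  have h2 : δ ≠ 0 := hδ.ne
  constructor
  · field_simp
    ring
  · field_simp

theorem stmt_2_general (lam ρ μ1 μ2 δ2 βs βb : ℝ)
    (hlam : 0 < lam) (hμ1 : μ1 < ρ)
    (hβs : 0 < βs) (hβ : βs < βb)
    (hδ2 : δ2 = (1 + (μ1 - μ2) / lam
      - Real.sqrt ((1 + (μ1 - μ2) / lam) ^ 2 + 4 * (ρ - μ1) / lam)) / 2) :
    βs - βb * ((βs / βb) * (-δ2) / (1 - δ2))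
      = (βs / (1 - δ2)) ^ (1 - δ2) * (βb / (-δ2)) ^ δ2
        * ((βs / βb) * (-δ2) / (1 - δ2)) ^ δ2 ∧
    -βb = (βs / (1 - δ2)) ^ (1 - δ2) * (βb / (-δ2)) ^ δ2 * δ2
        * ((βs / βb) * (-δ2) / (1 - δ2)) ^ (δ2 - 1) := by
  have hdisc : 0 < 4 * (ρ - μ1) / lam := div_pos (by linarith) hlam
  have hδ2_neg : δ2 < 0 := by
    have := lt_sqrt_sq_add (t := 1 + (μ1 - μ2) / lam) hdisc
    rw [hδ2]
    linarith
  exact smooth_fit_of_neg hβs (hβs.trans hβ) hδ2_neg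

/-- k1 = (βs/βb)·(−δ2)/(1−δ2) and C2 = (βs/(1−δ2))^{1−δ2}·(βb/(−δ2))^{δ2}
satisfy the smooth-fit conditions βs − βb·k1 = C2·k1^{δ2} and −βb = C2·δ2·k1^{δ2−1}. -/
theorem stmt_2 (lam ρ μ1 μ2 δ1 δ2 βs βb : ℝ)
    (hlam : 0 < lam) (hμ1 : μ1 < ρ) (hμ2 : μ2 < ρ)
    (hβs : 0 < βs) (hβ : βs < βb)
    (hδ1 : δ1 = (1 + (μ1 - μ2) / lam
      + Real.sqrt ((1 + (μ1 - μ2) / lam) ^ 2 + 4 * (ρ - μ1) / lam)) / 2)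
    (hδ2 : δ2 = (1 + (μ1 - μ2) / lam
      - Real.sqrt ((1 + (μ1 - μ2) / lam) ^ 2 + 4 * (ρ - μ1) / lam)) / 2) :
    βs - βb * ((βs / βb) * (-δ2) / (1 - δ2))
      = (βs / (1 - δ2)) ^ (1 - δ2) * (βb / (-δ2)) ^ δ2
        * ((βs / βb) * (-δ2) / (1 - δ2)) ^ δ2 ∧
    -βb = (βs / (1 - δ2)) ^ (1 - δ2) * (βb / (-δ2)) ^ δ2 * δ2
        * ((βs / βb) * (-δ2) / (1 - δ2)) ^ (δ2 - 1) :=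
  stmt_2_general lam ρ μ1 μ2 δ2 βs βb hlam hμ1 hβs hβ hδ2
end

section
/- Define f(y) = C2·(δ1 − δ2)·y^{δ2} + βs·(δ1 − 1)·y − βb·δ1 for y > 0 and let y_c = [βs·(δ1 − 1)/(C2·(−δ2)·(δ1 − δ2))]^{1/(δ2 − 1)}. Then f(y_c) = βb·δ1·[β^{−1−r/(1+r)}·(1 + r/δ1)^{1/(1+r)}·(1 − 1/δ1)^{r/(1+r)} − 1], where r = −δ2 and β = βb/βs, and f(y_c) < 0. -/
/-!
With r = -δ2 > 0, y_c is the critical point of f, where the linear term equals r times the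
power term, so f(y_c) = C2 (δ1 + r)(1 + r) y_c^{-r} - βb δ1. Taking logarithms, this power term
equals βb δ1 β^{-1-q} (1 + r/δ1)^{1-q} (1 - 1/δ1)^q with q = r/(1+r). The bracket is below 1:
the first factor is below 1 since β > 1, and the product of the other two is at most
(1-q)(1 + r/δ1) + q(1 - 1/δ1) = 1 by weighted AM-GM.
-/

open Real

theorem one_lt_add_sqrt_sq_add_div_two {a b : ℝ} (hb : 0 < b) (hab : 1 < a + b) :
    1 < (a + √(a ^ 2 + 4 * b)) / 2 := by
  have hs := sq_sqrt (by positivity : 0 ≤ a ^ 2 + 4 * b)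
  nlinarith [sqrt_nonneg (a ^ 2 + 4 * b)]

theorem sub_sqrt_sq_add_div_two_neg {a b : ℝ} (hb : 0 < b) :
    (a - √(a ^ 2 + 4 * b)) / 2 < 0 := by
  have hs := sq_sqrt (by positivity : 0 ≤ a ^ 2 + 4 * b)
  nlinarith [sqrt_nonneg (a ^ 2 + 4 * b)]

theorem mul_rpow_neg_add_mul_at_critical_point {c b r : ℝ} (hc : 0 < c) (hb : 0 < b)
    (hr : 0 < r) :
    c * ((b / (c * r)) ^ (1 / (-r - 1))) ^ (-r) + b * (b / (c * r)) ^ (1 / (-r - 1))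
      = c * (1 + r) * (b / (c * r)) ^ (r / (1 + r)) := by
  set A := b / (c * r) with hA_def
  have hA : 0 < A := by positivity
  have hy : 0 < A ^ (1 / (-r - 1)) := by positivity
  have hcrit : (A ^ (1 / (-r - 1))) ^ (-r) = A * A ^ (1 / (-r - 1)) := by
    have h := rpow_inv_rpow hA.le (by linarith : -r - 1 ≠ 0)
    rw [← one_div, rpow_sub_one hy.ne', div_eq_iff hy.ne'] at h
    exact h
  have hb_eq : b = c * r * A := by rw [hA_def]; field_simp
  have hexp : 1 / (-r - 1) * -r = r / (1 + r) := by
    rw [show -r - 1 = -(1 + r) by ring]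
    field_simp
  calc c * (A ^ (1 / (-r - 1))) ^ (-r) + b * A ^ (1 / (-r - 1))
      = c * (1 + r) * (A ^ (1 / (-r - 1))) ^ (-r) := by rw [hcrit, hb_eq]; ring
    _ = c * (1 + r) * A ^ (r / (1 + r)) := by rw [← rpow_mul hA.le, hexp]

theorem critical_value_eq_closed_form {βs βb δ r C : ℝ} (hβs : 0 < βs) (hβb : 0 < βb)
    (hδ : 1 < δ) (hr : 0 < r) (hC : C = (βs / (1 + r)) ^ (1 + r) * (βb / r) ^ (-r)) :
    C * (δ + r) * (1 + r) * (βs * (δ - 1) / (C * (δ + r) * r)) ^ (r / (1 + r))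
      = βb * δ * ((βb / βs) ^ (-1 - r / (1 + r)) * (1 + r / δ) ^ (1 / (1 + r))
        * (1 - 1 / δ) ^ (r / (1 + r))) := by
  have hδ0 : 0 < δ := by linarith
  have hδ1 : 0 < δ - 1 := by linarith
  have hC0 : 0 < C := by rw [hC]; positivity
  rw [show 1 + r / δ = (δ + r) / δ by field_simp, show 1 - 1 / δ = (δ - 1) / δ by field_simp]
  refine log_injOn_pos (Set.mem_Ioi.2 (by positivity)) (Set.mem_Ioi.2 (by positivity)) ?_
  simp (disch := positivity) only [log_mul, log_div, log_rpow]
  rw [hC]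
  simp (disch := positivity) only [log_mul, log_div, log_rpow]
  field_simp
  ring

theorem rpow_mul_rpow_mul_rpow_lt_one {β δ r : ℝ} (hβ : 1 < β) (hδ : 1 < δ) (hr : 0 < r) :
    β ^ (-1 - r / (1 + r)) * (1 + r / δ) ^ (1 / (1 + r)) * (1 - 1 / δ) ^ (r / (1 + r)) < 1 := by
  have hδ0 : 0 < δ := by linarith
  have h1 : 0 < 1 - 1 / δ := by rw [sub_pos, div_lt_one hδ0]; exact hδ
  have hamgm : (1 + r / δ) ^ (1 / (1 + r)) * (1 - 1 / δ) ^ (r / (1 + r)) ≤ 1 :=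
    calc (1 + r / δ) ^ (1 / (1 + r)) * (1 - 1 / δ) ^ (r / (1 + r))
        ≤ 1 / (1 + r) * (1 + r / δ) + r / (1 + r) * (1 - 1 / δ) :=
          geom_mean_le_arith_mean2_weighted (by positivity) (by positivity) (by positivity) h1.le
            (by field_simp)
      _ = 1 := by field_simp; ring
  have hβpow : β ^ (-1 - r / (1 + r)) < 1 :=
    rpow_lt_one_of_one_lt_of_neg hβ (by linarith [show 0 < r / (1 + r) by positivity])
  rw [mul_assoc]
  calc _ < 1 * ((1 + r / δ) ^ (1 / (1 + r)) * (1 - 1 / δ) ^ (r / (1 + r))) := by gcongr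
    _ ≤ 1 := by linarith

/-- value of f at the minimizer y_c:
f(y_c) = βb·δ1·[β^{−1−r/(1+r)}·(1 + r/δ1)^{1/(1+r)}·(1 − 1/δ1)^{r/(1+r)} − 1]
with r = −δ2 and β = βb/βs, and f(y_c) < 0. -/
theorem stmt_5 (lam ρ μ1 μ2 δ1 δ2 βs βb C2 yc : ℝ)
    (hlam : 0 < lam) (hμ1 : μ1 < ρ) (hμ2 : μ2 < ρ)
    (hβs : 0 < βs) (hβ : βs < βb)
    (hδ1 : δ1 = (1 + (μ1 - μ2) / lam
      + Real.sqrt ((1 + (μ1 - μ2) / lam) ^ 2 + 4 * (ρ - μ1) / lam)) / 2)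
    (hδ2 : δ2 = (1 + (μ1 - μ2) / lam
      - Real.sqrt ((1 + (μ1 - μ2) / lam) ^ 2 + 4 * (ρ - μ1) / lam)) / 2)
    (hC2 : C2 = (βs / (1 - δ2)) ^ (1 - δ2) * (βb / (-δ2)) ^ δ2)
    (hyc : yc = (βs * (δ1 - 1) / (C2 * (-δ2) * (δ1 - δ2))) ^ (1 / (δ2 - 1)))
    (f : ℝ → ℝ)
    (hf : f = fun y : ℝ => C2 * (δ1 - δ2) * y ^ δ2 + βs * (δ1 - 1) * y - βb * δ1) :
    f yc = βb * δ1 *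
      ((βb / βs) ^ (-1 - (-δ2) / (1 + (-δ2)))
        * (1 + (-δ2) / δ1) ^ (1 / (1 + (-δ2)))
        * (1 - 1 / δ1) ^ ((-δ2) / (1 + (-δ2))) - 1) ∧
    f yc < 0 := by
  have hβb : 0 < βb := hβs.trans hβ
  have hρ : 0 < (ρ - μ1) / lam := div_pos (by linarith) hlam
  rw [mul_div_assoc] at hδ1 hδ2
  have hδ1_gt : 1 < δ1 := hδ1 ▸ one_lt_add_sqrt_sq_add_div_two hρ (by
    rw [add_assoc, ← add_div, sub_add_sub_cancel']
    linarith [div_pos (by linarith : 0 < ρ - μ2) hlam])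
  obtain ⟨r, hr, rfl⟩ : ∃ r, 0 < r ∧ δ2 = -r :=
    ⟨-δ2, by linarith [hδ2 ▸ sub_sqrt_sq_add_div_two_neg hρ], by ring⟩
  simp only [neg_neg, sub_neg_eq_add] at hC2 hyc hf ⊢
  have hC2_pos : 0 < C2 := hC2 ▸ by positivity
  have hfyc : f yc = βb * δ1 * ((βb / βs) ^ (-1 - r / (1 + r)) * (1 + r / δ1) ^ (1 / (1 + r))
      * (1 - 1 / δ1) ^ (r / (1 + r)) - 1) :=
    calc f yc = C2 * (δ1 + r) * yc ^ (-r) + βs * (δ1 - 1) * yc - βb * δ1 := by rw [hf]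
      _ = C2 * (δ1 + r) * (1 + r) * (βs * (δ1 - 1) / (C2 * (δ1 + r) * r)) ^ (r / (1 + r))
          - βb * δ1 := by
        rw [hyc, mul_right_comm C2 r, mul_rpow_neg_add_mul_at_critical_point (by positivity)
          (mul_pos hβs (sub_pos.2 hδ1_gt)) hr]
      _ = _ := by rw [critical_value_eq_closed_form hβs hβb hδ1_gt hr hC2]; ring
  refine ⟨hfyc, hfyc ▸ mul_neg_of_pos_of_neg (by positivity) ?_⟩
  linarith [rpow_mul_rpow_mul_rpow_lt_one ((one_lt_div hβs).2 hβ) hδ1_gt hr]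
end

section
/- Define f(y) = C2·(δ1 − δ2)·y^{δ2} + βs·(δ1 − 1)·y − βb·δ1 for y > 0 and let y_c = [βs·(δ1 − 1)/(C2·(−δ2)·(δ1 − δ2))]^{1/(δ2 − 1)}. Then f has exactly two zeros on (0,∞): one in the interval (0, y_c) and one in the interval (y_c, ∞). -/
/-!
Write `f y = A y^p + B y - K` with `A, B > 0` and `p = δ2 < 0`. Its derivative
`A p y^(p-1) + B` vanishes only at `y_c` and changes sign there from `-` to `+`, and `f → +∞` at
both ends of `(0, ∞)`; so `f` has exactly one zero on each side of `y_c` as soon as it is negative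
somewhere. The definition of `C2` makes the power term explicit at
`y₀ = (βs / (1 - δ2)) / (βb / (-δ2))`, where `f y₀ < 0` reduces to `βs < βb`. The bounds
`δ2 < 0` and `1 < δ1` hold because `0` and `1` lie strictly between the two roots of the
quadratic defining them.
-/

open Set Filter Topology

lemma sub_sqrt_div_two_lt_and_lt_add_sqrt_div_two {s D t : ℝ} (h : (s - 2 * t) ^ 2 < D) :
    (s - √D) / 2 < t ∧ t < (s + √D) / 2 := by
  obtain ⟨h₁, h₂⟩ := Real.sq_lt.mp h
  constructor <;> linarith

noncomputable def rpowAddLinear (A B K p y : ℝ) : ℝ := A * y ^ p + B * y - K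

namespace rpowAddLinear

noncomputable def criticalPoint (A B p : ℝ) : ℝ := (B / (A * (-p))) ^ (1 / (p - 1))

variable {A B K p : ℝ}

lemma hasDerivAt (A B K : ℝ) {y : ℝ} (hy : y ≠ 0) :
    HasDerivAt (rpowAddLinear A B K p) (A * (p * y ^ (p - 1)) + B) y := by
  show HasDerivAt (fun y => A * y ^ p + B * y - K) _ y
  simpa using (((Real.hasDerivAt_rpow_const (Or.inl hy)).const_mul A).add
    ((hasDerivAt_id y).const_mul B)).sub_const K

lemma continuousOn (A B K p : ℝ) {s : Set ℝ} (hs : s ⊆ Ioi 0) :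
    ContinuousOn (rpowAddLinear A B K p) s := fun _ hy =>
  (hasDerivAt A B K (hs hy).ne').continuousAt.continuousWithinAt

lemma tendsto_nhdsGT_zero (hA : 0 < A) (hp : p < 0) (B K : ℝ) :
    Tendsto (rpowAddLinear A B K p) (𝓝[>] 0) atTop := by
  have hlin : Tendsto (fun y : ℝ => B * y - K) (𝓝[>] 0) (𝓝 (B * 0 - K)) :=
    ((continuous_const.mul continuous_id).sub continuous_const).tendsto 0 |>.mono_left
      nhdsWithin_le_nhds
  refine (((tendsto_rpow_neg_nhdsGT_zero hp).const_mul_atTop hA).atTop_add hlin).congr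
    fun y => ?_
  simp only [rpowAddLinear]
  ring

lemma tendsto_atTop (hA : 0 < A) (hB : 0 < B) (K p : ℝ) :
    Tendsto (rpowAddLinear A B K p) atTop atTop := by
  refine tendsto_atTop_mono' _ ?_ (tendsto_atTop_add_const_right _ (-K)
    (tendsto_id.const_mul_atTop hB))
  filter_upwards [eventually_ge_atTop 0] with y hy
  have : 0 ≤ A * y ^ p := mul_nonneg hA.le (Real.rpow_nonneg hy p)
  simp only [rpowAddLinear, id]
  linarith

variable (hA : 0 < A) (hB : 0 < B) (hp : p < 0)
include hA hB hp

lemma criticalPoint_pos : 0 < criticalPoint A B p :=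
  Real.rpow_pos_of_pos (div_pos hB (mul_pos hA (neg_pos.mpr hp))) _

lemma derivative_eq (y : ℝ) : A * (p * y ^ (p - 1)) + B
    = A * (-p) * (criticalPoint A B p ^ (p - 1) - y ^ (p - 1)) := by
  have hAp : 0 < A * (-p) := mul_pos hA (neg_pos.mpr hp)
  rw [criticalPoint, ← Real.rpow_mul (div_pos hB hAp).le, one_div_mul_cancel (by linarith),
    Real.rpow_one, mul_sub, mul_div_cancel₀ _ hAp.ne']
  ring

lemma strictAntiOn : StrictAntiOn (rpowAddLinear A B K p) (Ioc 0 (criticalPoint A B p)) := by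
  refine strictAntiOn_of_deriv_neg (convex_Ioc _ _) (continuousOn A B K p fun _ hy => hy.1) ?_
  rw [interior_Ioc]
  intro y hy
  rw [(hasDerivAt A B K hy.1.ne').deriv, derivative_eq hA hB hp]
  exact mul_neg_of_pos_of_neg (mul_pos hA (neg_pos.mpr hp)) (sub_neg.mpr
    (Real.rpow_lt_rpow_of_neg hy.1 hy.2 (by linarith)))

lemma strictMonoOn : StrictMonoOn (rpowAddLinear A B K p) (Ici (criticalPoint A B p)) := by
  have hc := criticalPoint_pos hA hB hp
  refine strictMonoOn_of_deriv_pos (convex_Ici _)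
    (continuousOn A B K p fun _ hy => hc.trans_le hy) ?_
  rw [interior_Ici]
  intro y hy
  rw [(hasDerivAt A B K (hc.trans hy).ne').deriv, derivative_eq hA hB hp]
  exact mul_pos (mul_pos hA (neg_pos.mpr hp)) (sub_pos.mpr
    (Real.rpow_lt_rpow_of_neg hc hy (by linarith)))

theorem exists_zeros_of_neg {y₀ : ℝ} (hy₀ : 0 < y₀) (hneg : rpowAddLinear A B K p y₀ < 0) :
    ∃ a b, a ∈ Ioo 0 (criticalPoint A B p) ∧ b ∈ Ioi (criticalPoint A B p) ∧
      rpowAddLinear A B K p a = 0 ∧ rpowAddLinear A B K p b = 0 ∧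
      ∀ y, 0 < y → rpowAddLinear A B K p y = 0 → y = a ∨ y = b := by
  set c := criticalPoint A B p
  set g := rpowAddLinear A B K p
  have hc : 0 < c := criticalPoint_pos hA hB hp
  have hgc : g c < 0 := by
    rcases le_total y₀ c with h | h
    · exact ((strictAntiOn hA hB hp).antitoneOn ⟨hy₀, h⟩ ⟨hc, le_rfl⟩ h).trans_lt hneg
    · exact ((strictMonoOn hA hB hp).monotoneOn Set.self_mem_Ici h h).trans_lt hneg
  obtain ⟨y₁, hgy₁, hy₁0, hy₁c⟩ :=
    (((tendsto_nhdsGT_zero hA hp B K).eventually_gt_atTop 0).and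
      (Ioo_mem_nhdsGT hc)).exists
  obtain ⟨y₂, hgy₂, hy₂c⟩ :=
    (((tendsto_atTop hA hB K p).eventually_gt_atTop 0).and (eventually_gt_atTop c)).exists
  obtain ⟨a, ⟨hy₁a, hac⟩, hga⟩ := intermediate_value_Ioo' hy₁c.le
    (continuousOn A B K p fun _ hy => hy₁0.trans_le hy.1) ⟨hgc, hgy₁⟩
  obtain ⟨b, ⟨hcb, hby₂⟩, hgb⟩ := intermediate_value_Ioo hy₂c.le
    (continuousOn A B K p fun _ hy => hc.trans_le hy.1) ⟨hgc, hgy₂⟩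
  refine ⟨a, b, ⟨hy₁0.trans hy₁a, hac⟩, hcb, hga, hgb, fun y hy hgy => ?_⟩
  rcases le_or_gt y c with hyc | hyc
  · exact .inl <| (strictAntiOn hA hB hp).injOn ⟨hy, hyc⟩ ⟨hy₁0.trans hy₁a, hac.le⟩
      (hgy.trans hga.symm)
  · exact .inr <| (strictMonoOn hA hB hp).injOn hyc.le hcb.le (hgy.trans hgb.symm)

end rpowAddLinear

lemma rpow_one_sub_mul_rpow_mul_div_rpow {u v : ℝ} (hu : 0 < u) (hv : 0 < v) (p : ℝ) :
    u ^ (1 - p) * v ^ p * (u / v) ^ p = u := by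
  rw [Real.div_rpow hu.le hv.le, mul_assoc, mul_div_cancel₀ _ (Real.rpow_pos_of_pos hv p).ne',
    ← Real.rpow_add hu, sub_add_cancel, Real.rpow_one]

/-- The exponent of `C2` is chosen so that the power term at this point is `(d - p) βs / (1 - p)`. -/
lemma rpowAddLinear_neg {p d βs βb : ℝ} (hp : p < 0) (hd : 1 < d) (hβs : 0 < βs)
    (hβ : βs < βb) :
    rpowAddLinear ((βs / (1 - p)) ^ (1 - p) * (βb / (-p)) ^ p * (d - p)) (βs * (d - 1)) (βb * d) p
      ((βs / (1 - p)) / (βb / (-p))) < 0 := by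
  have hβb : 0 < βb := hβs.trans hβ
  have h1p : 0 < 1 - p := by linarith
  have hval : rpowAddLinear ((βs / (1 - p)) ^ (1 - p) * (βb / (-p)) ^ p * (d - p))
      (βs * (d - 1)) (βb * d) p ((βs / (1 - p)) / (βb / (-p)))
      = (βs * βb * (d - p) + βs * βs * (-p * (d - 1))) / ((1 - p) * βb) - βb * d := by
    rw [rpowAddLinear, mul_right_comm,
      rpow_one_sub_mul_rpow_mul_div_rpow (div_pos hβs h1p) (div_pos hβb (neg_pos.mpr hp))]
    field_simp
  rw [hval, sub_neg, div_lt_iff₀ (by positivity)]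
  have h₁ : βs * βb < βb * βb := mul_lt_mul_of_pos_right hβ hβb
  have h₂ : βs * βs < βb * βb := mul_self_lt_mul_self hβs.le hβ
  nlinarith [mul_lt_mul_of_pos_right h₁ (by linarith : 0 < d - p),
    mul_lt_mul_of_pos_right h₂ (mul_pos (by linarith : 0 < -p) (by linarith : 0 < d - 1))]

/-- f has exactly two zeros on (0,∞): one in (0, y_c) and one in (y_c, ∞). -/
theorem stmt_6 (lam ρ μ1 μ2 δ1 δ2 βs βb C2 yc : ℝ)
    (hlam : 0 < lam) (hμ1 : μ1 < ρ) (hμ2 : μ2 < ρ)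
    (hβs : 0 < βs) (hβ : βs < βb)
    (hδ1 : δ1 = (1 + (μ1 - μ2) / lam
      + Real.sqrt ((1 + (μ1 - μ2) / lam) ^ 2 + 4 * (ρ - μ1) / lam)) / 2)
    (hδ2 : δ2 = (1 + (μ1 - μ2) / lam
      - Real.sqrt ((1 + (μ1 - μ2) / lam) ^ 2 + 4 * (ρ - μ1) / lam)) / 2)
    (hC2 : C2 = (βs / (1 - δ2)) ^ (1 - δ2) * (βb / (-δ2)) ^ δ2)
    (hyc : yc = (βs * (δ1 - 1) / (C2 * (-δ2) * (δ1 - δ2))) ^ (1 / (δ2 - 1)))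
    (f : ℝ → ℝ)
    (hf : f = fun y : ℝ => C2 * (δ1 - δ2) * y ^ δ2 + βs * (δ1 - 1) * y - βb * δ1) :
    ∃ a b : ℝ, a ∈ Set.Ioo 0 yc ∧ b ∈ Set.Ioi yc ∧ f a = 0 ∧ f b = 0 ∧
      ∀ y : ℝ, 0 < y → f y = 0 → y = a ∨ y = b := by
  have hδ2_neg : δ2 < 0 := by
    rw [hδ2]
    refine (sub_sqrt_div_two_lt_and_lt_add_sqrt_div_two ?_).1
    have := div_pos (sub_pos.mpr hμ1) hlam
    linarith [mul_div_assoc 4 (ρ - μ1) lam]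
  have hδ1_gt : 1 < δ1 := by
    rw [hδ1]
    refine (sub_sqrt_div_two_lt_and_lt_add_sqrt_div_two ?_).2
    have := div_pos (sub_pos.mpr hμ2) hlam
    have key : (1 + (μ1 - μ2) / lam) ^ 2 + 4 * (ρ - μ1) / lam - (1 + (μ1 - μ2) / lam - 2 * 1) ^ 2
        = 4 * ((ρ - μ2) / lam) := by
      field_simp
      ring
    linarith
  have hβb : 0 < βb := hβs.trans hβ
  have hcrit : yc = rpowAddLinear.criticalPoint (C2 * (δ1 - δ2)) (βs * (δ1 - 1)) δ2 := by
    rw [hyc, rpowAddLinear.criticalPoint, mul_right_comm]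
  subst hf hcrit hC2
  exact rpowAddLinear.exists_zeros_of_neg (by bound) (by bound) hδ2_neg (by bound)
    (rpowAddLinear_neg hδ2_neg hδ1_gt hβs hβ)
end

section
/- Define f(y) = C2·(δ1 − δ2)·y^{δ2} + βs·(δ1 − 1)·y − βb·δ1 for y > 0 and let a0 = (βs/βb)^{−δ2/(1−δ2)} · (−δ2)/(1 − δ2). Then f(a0) = βb·δ1·[(βs/βb)^{1 + (−δ2)/(1−δ2)} − 1], and f(a0) < 0. -/
/-!
Since the discriminant exceeds the square of `1 + (μ1 - μ2)/λ`, its square root exceeds the absolute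
value of that number, whence `δ2 < 0 < δ1`. Writing `R = (βs/βb)^(1 + (-δ2)/(1-δ2))`, the two terms of
`f` at `a0` are `C2 a0^δ2 = βb R/(1-δ2)` and `βs a0 = βb R (-δ2)/(1-δ2)` (the first is checked on
logarithms), so `f a0` collapses to `βb δ1 (R - 1)`; finally `R < 1` because `βs < βb` and the exponent
is positive.
-/

lemma abs_lt_sqrt_sq_add (A : ℝ) {P : ℝ} (hP : 0 < P) : |A| < √(A ^ 2 + P) := by
  rw [← Real.sqrt_sq_eq_abs]
  exact Real.sqrt_lt_sqrt (sq_nonneg A) (lt_add_of_pos_right _ hP)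

lemma mul_div_rpow_one_add {a b : ℝ} (ha : 0 < a) (hb : 0 < b) (e : ℝ) :
    b * (a / b) ^ (1 + e) = a * (a / b) ^ e := by
  rw [Real.rpow_add (div_pos ha hb), Real.rpow_one, ← mul_assoc, mul_div_cancel₀ _ hb.ne']

lemma div_rpow_mul_div_rpow_mul_rpow {a b δ : ℝ} (ha : 0 < a) (hb : 0 < b) (hδ : δ < 0) :
    (a / (1 - δ)) ^ (1 - δ) * (b / -δ) ^ δ * ((a / b) ^ (-δ / (1 - δ)) * -δ / (1 - δ)) ^ δ
      = b * (a / b) ^ (1 + -δ / (1 - δ)) / (1 - δ) := by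
  obtain ⟨s, hs, rfl⟩ : ∃ s, 0 < s ∧ δ = -s := ⟨-δ, by linarith, by ring⟩
  simp only [neg_neg, sub_neg_eq_add]
  apply Real.log_injOn_pos (Set.mem_Ioi.2 (by positivity)) (Set.mem_Ioi.2 (by positivity))
  simp (disch := positivity) only [Real.log_mul, Real.log_div, Real.log_rpow]
  field_simp
  ring

theorem stmt_7_general (lam ρ μ1 μ2 δ1 δ2 βs βb C2 a0 : ℝ)
    (hlam : 0 < lam) (hμ1 : μ1 < ρ)
    (hβs : 0 < βs) (hβ : βs < βb)
    (hδ1 : δ1 = (1 + (μ1 - μ2) / lam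
      + Real.sqrt ((1 + (μ1 - μ2) / lam) ^ 2 + 4 * (ρ - μ1) / lam)) / 2)
    (hδ2 : δ2 = (1 + (μ1 - μ2) / lam
      - Real.sqrt ((1 + (μ1 - μ2) / lam) ^ 2 + 4 * (ρ - μ1) / lam)) / 2)
    (hC2 : C2 = (βs / (1 - δ2)) ^ (1 - δ2) * (βb / (-δ2)) ^ δ2)
    (ha0 : a0 = (βs / βb) ^ (-δ2 / (1 - δ2)) * (-δ2) / (1 - δ2))
    (f : ℝ → ℝ)
    (hf : f = fun y : ℝ => C2 * (δ1 - δ2) * y ^ δ2 + βs * (δ1 - 1) * y - βb * δ1) :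
    f a0 = βb * δ1 * ((βs / βb) ^ (1 + (-δ2) / (1 - δ2)) - 1) ∧ f a0 < 0 := by
  have hβb : 0 < βb := hβs.trans hβ
  obtain ⟨hδ2neg, hδ1pos⟩ : δ2 < 0 ∧ 0 < δ1 := by
    have := abs_lt.1 (abs_lt_sqrt_sq_add (1 + (μ1 - μ2) / lam)
      (show 0 < 4 * (ρ - μ1) / lam by have := sub_pos.2 hμ1; positivity))
    exact ⟨by rw [hδ2]; linarith, by rw [hδ1]; linarith⟩
  have hu : 0 < 1 - δ2 := by linarith
  have hs : 0 < -δ2 := by linarith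
  set R := (βs / βb) ^ (1 + (-δ2) / (1 - δ2))
  have hpow : C2 * a0 ^ δ2 = βb * R / (1 - δ2) := by
    rw [hC2, ha0]; exact div_rpow_mul_div_rpow_mul_rpow hβs hβb hδ2neg
  have hlin : βs * a0 = βb * R * -δ2 / (1 - δ2) := by
    rw [ha0, mul_div_rpow_one_add hβs hβb]; ring
  have hval : f a0 = βb * δ1 * (R - 1) :=
    calc f a0 = (δ1 - δ2) * (C2 * a0 ^ δ2) + (δ1 - 1) * (βs * a0) - βb * δ1 := by
          rw [hf]; ring
      _ = βb * δ1 * (R - 1) := by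
          rw [hpow, hlin]; field_simp; ring
  have hR : R < 1 := Real.rpow_lt_one (div_pos hβs hβb).le ((div_lt_one hβb).2 hβ) (by positivity)
  exact ⟨hval, hval ▸ mul_neg_of_pos_of_neg (by positivity) (sub_neg.2 hR)⟩

/-- with a0 = (βs/βb)^{−δ2/(1−δ2)}·(−δ2)/(1−δ2), one has
f(a0) = βb·δ1·[(βs/βb)^{1 + (−δ2)/(1−δ2)} − 1] < 0. -/
theorem stmt_7 (lam ρ μ1 μ2 δ1 δ2 βs βb C2 a0 : ℝ)
    (hlam : 0 < lam) (hμ1 : μ1 < ρ) (hμ2 : μ2 < ρ)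
    (hβs : 0 < βs) (hβ : βs < βb)
    (hδ1 : δ1 = (1 + (μ1 - μ2) / lam
      + Real.sqrt ((1 + (μ1 - μ2) / lam) ^ 2 + 4 * (ρ - μ1) / lam)) / 2)
    (hδ2 : δ2 = (1 + (μ1 - μ2) / lam
      - Real.sqrt ((1 + (μ1 - μ2) / lam) ^ 2 + 4 * (ρ - μ1) / lam)) / 2)
    (hC2 : C2 = (βs / (1 - δ2)) ^ (1 - δ2) * (βb / (-δ2)) ^ δ2)
    (ha0 : a0 = (βs / βb) ^ (-δ2 / (1 - δ2)) * (-δ2) / (1 - δ2))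
    (f : ℝ → ℝ)
    (hf : f = fun y : ℝ => C2 * (δ1 - δ2) * y ^ δ2 + βs * (δ1 - 1) * y - βb * δ1) :
    f a0 = βb * δ1 * ((βs / βb) ^ (1 + (-δ2) / (1 - δ2)) - 1) ∧ f a0 < 0 :=
  stmt_7_general lam ρ μ1 μ2 δ1 δ2 βs βb C2 a0 hlam hμ1 hβs hβ hδ1 hδ2 hC2 ha0 f hf
end

section
/- Let k2 be the larger of the two zeros in (0,∞) of f(y) = C2·(δ1 − δ2)·y^{δ2} + βs·(δ1 − 1)·y − βb·δ1. Then k2 > (βs/βb)^{−δ2/(1−δ2)} · (−δ2)/(1 − δ2), hence C2·δ2·k2^{δ2−1} + βs > 0; in particular the constant C1 = (C2·δ2·k2^{δ2−1} + βs)/(δ1·k2^{δ1−1}) is strictly positive. -/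
/-!
With `δ = δ2 < 0`, the point `m = (βs/βb)^{-δ/(1-δ)} · (-δ)/(1-δ)` is exactly where
`C2 · δ · y^{δ-1} + βs` vanishes, and this function is strictly increasing in `y > 0`. So it
suffices to show `k2 > m`. At `m` one computes `f m = δ1 · (βs · (βs/βb)^{-δ/(1-δ)} - βb) < 0`,
while `f` grows linearly at infinity; the intermediate value theorem gives a zero of `f` beyond `m`,
and `k2` is the largest zero.
-/

theorem quadratic_root_sub_neg {B d : ℝ} (hd : 0 < d) : (B - √(B ^ 2 + d)) / 2 < 0 := by
  have : |B| < √(B ^ 2 + d) := (Real.lt_sqrt (abs_nonneg B)).2 (by rw [sq_abs]; linarith)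
  linarith [le_abs_self B]

theorem one_lt_quadratic_root_add {B d : ℝ} (h : 4 < 4 * B + d) : 1 < (B + √(B ^ 2 + d)) / 2 := by
  have : 2 - B < √(B ^ 2 + d) := by
    rcases le_or_gt 2 B with hB | hB
    · exact (sub_nonpos.2 hB).trans_lt (Real.sqrt_pos.2 (by nlinarith))
    · exact Real.lt_sqrt_of_sq_lt (by nlinarith)
  linarith

noncomputable def coeffC₂ (βs βb δ : ℝ) : ℝ := (βs / (1 - δ)) ^ (1 - δ) * (βb / (-δ)) ^ δ

noncomputable def threshold (βs βb δ : ℝ) : ℝ := (βs / βb) ^ (-δ / (1 - δ)) * (-δ) / (1 - δ)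

section
variable {βs βb δ : ℝ}

theorem coeffC₂_pos (hβs : 0 < βs) (hβb : 0 < βb) (hδ : δ < 0) : 0 < coeffC₂ βs βb δ := by
  have : 0 < 1 - δ := by linarith
  have : 0 < -δ := by linarith
  unfold coeffC₂; positivity

theorem threshold_pos (hβs : 0 < βs) (hβb : 0 < βb) (hδ : δ < 0) : 0 < threshold βs βb δ := by
  have : 0 < 1 - δ := by linarith
  have : 0 < -δ := by linarith
  unfold threshold; positivity

theorem coeffC₂_mul_rpow_threshold (hβs : 0 < βs) (hβb : 0 < βb) (hδ : δ < 0) :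
    coeffC₂ βs βb δ * (-δ) * threshold βs βb δ ^ (δ - 1) = βs := by
  have hp : 0 < 1 - δ := by linarith
  have ha : 0 < -δ := by linarith
  have hr : 0 < βs / βb := by positivity
  unfold coeffC₂ threshold
  rw [mul_div_assoc, Real.mul_rpow (by positivity) (by positivity), ← Real.rpow_mul hr.le,
    show -δ / (1 - δ) * (δ - 1) = δ by field_simp; ring]
  simp only [Real.div_rpow hβs.le hp.le, Real.div_rpow hβb.le ha.le, Real.div_rpow hβs.le hβb.le,
    Real.div_rpow ha.le hp.le, Real.rpow_sub hβs, Real.rpow_sub hp, Real.rpow_sub ha, Real.rpow_one]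
  have : 0 < βb ^ δ := by positivity
  have : 0 < βs ^ δ := by positivity
  have : 0 < (-δ) ^ δ := by positivity
  have : 0 < (1 - δ) ^ δ := by positivity
  have : δ ≠ 0 := hδ.ne
  field_simp

theorem coeffC₂_mul_rpow_threshold_self (hβs : 0 < βs) (hβb : 0 < βb) (hδ : δ < 0) :
    coeffC₂ βs βb δ * threshold βs βb δ ^ δ * (-δ) = βs * threshold βs βb δ := by
  have hm := threshold_pos hβs hβb hδ
  have key := coeffC₂_mul_rpow_threshold hβs hβb hδ
  rw [Real.rpow_sub_one hm.ne'] at key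
  calc _ = coeffC₂ βs βb δ * (-δ) * (threshold βs βb δ ^ δ / threshold βs βb δ)
        * threshold βs βb δ := by field_simp
    _ = _ := by rw [key]

theorem threshold_mul_lt (hβs : 0 < βs) (hβ : βs < βb) (hδ : δ < 0) :
    βs * threshold βs βb δ * (1 - δ) < βb * (-δ) := by
  have hβb : 0 < βb := hβs.trans hβ
  have hq : (βs / βb) ^ (-δ / (1 - δ)) < 1 :=
    Real.rpow_lt_one (by positivity) ((div_lt_one hβb).2 hβ) (div_pos (by linarith) (by linarith))
  have : threshold βs βb δ * (1 - δ) = (βs / βb) ^ (-δ / (1 - δ)) * (-δ) := by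
    unfold threshold
    field_simp [show 1 - δ ≠ 0 by linarith]
  rw [mul_assoc, this, ← mul_assoc]
  exact mul_lt_mul_of_pos_right (by nlinarith) (by linarith)

theorem coeffC₂_mul_rpow_add_pos {y : ℝ} (hβs : 0 < βs) (hβb : 0 < βb) (hδ : δ < 0)
    (hy : threshold βs βb δ < y) : 0 < coeffC₂ βs βb δ * δ * y ^ (δ - 1) + βs := by
  have hlt : y ^ (δ - 1) < threshold βs βb δ ^ (δ - 1) :=
    Real.rpow_lt_rpow_of_neg (threshold_pos hβs hβb hδ) hy (by linarith)
  have hC : 0 < coeffC₂ βs βb δ * (-δ) := mul_pos (coeffC₂_pos hβs hβb hδ) (by linarith)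
  have := mul_lt_mul_of_pos_left hlt hC
  rw [coeffC₂_mul_rpow_threshold hβs hβb hδ] at this
  linarith

theorem exists_zero_gt_threshold {δ₁ : ℝ} (hβs : 0 < βs) (hβ : βs < βb) (hδ : δ < 0)
    (hδ₁ : 1 < δ₁) : ∃ y, threshold βs βb δ < y ∧
      coeffC₂ βs βb δ * (δ₁ - δ) * y ^ δ + βs * (δ₁ - 1) * y - βb * δ₁ = 0 := by
  have hβb : 0 < βb := hβs.trans hβ
  set m := threshold βs βb δ
  set C := coeffC₂ βs βb δ
  have hm : 0 < m := threshold_pos hβs hβb hδ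
  set f : ℝ → ℝ := fun y ↦ C * (δ₁ - δ) * y ^ δ + βs * (δ₁ - 1) * y - βb * δ₁
  have hfm : f m < 0 := by
    have h : (-δ) * f m = δ₁ * (βs * m * (1 - δ) - βb * (-δ)) := by
      linear_combination (δ₁ - δ) * coeffC₂_mul_rpow_threshold_self hβs hβb hδ
    have := threshold_mul_lt hβs hβ hδ
    nlinarith
  have hslope : 0 < βs * (δ₁ - 1) := mul_pos hβs (by linarith)
  set M := m + βb * δ₁ / (βs * (δ₁ - 1))
  have hmM : m < M := lt_add_of_pos_right m (by positivity)
  have hfM : 0 < f M := by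
    have : 0 < C * (δ₁ - δ) * M ^ δ :=
      mul_pos (mul_pos (coeffC₂_pos hβs hβb hδ) (by linarith)) (Real.rpow_pos_of_pos (hm.trans hmM) δ)
    have : βs * (δ₁ - 1) * (βb * δ₁ / (βs * (δ₁ - 1))) = βb * δ₁ := mul_div_cancel₀ _ hslope.ne'
    simp only [f, M]
    nlinarith
  have hcont : ContinuousOn f (Set.Icc m M) := by
    refine ContinuousOn.sub (ContinuousOn.add ?_ (by fun_prop)) continuousOn_const
    exact continuousOn_const.mul (continuousOn_id.rpow_const fun y hy ↦ Or.inl (hm.trans_le hy.1).ne')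
  obtain ⟨y, ⟨hmy, -⟩, hy⟩ := intermediate_value_Ioo hmM.le hcont ⟨hfm, hfM⟩
  exact ⟨y, hmy, hy⟩
end

theorem stmt_8_general (lam ρ μ1 μ2 δ1 δ2 βs βb C2 k2 : ℝ)
    (hlam : 0 < lam) (hμ1 : μ1 < ρ) (hμ2 : μ2 < ρ)
    (hβs : 0 < βs) (hβ : βs < βb)
    (hδ1 : δ1 = (1 + (μ1 - μ2) / lam
      + Real.sqrt ((1 + (μ1 - μ2) / lam) ^ 2 + 4 * (ρ - μ1) / lam)) / 2)
    (hδ2 : δ2 = (1 + (μ1 - μ2) / lam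
      - Real.sqrt ((1 + (μ1 - μ2) / lam) ^ 2 + 4 * (ρ - μ1) / lam)) / 2)
    (hC2 : C2 = (βs / (1 - δ2)) ^ (1 - δ2) * (βb / (-δ2)) ^ δ2)
    (f : ℝ → ℝ)
    (hf : f = fun y : ℝ => C2 * (δ1 - δ2) * y ^ δ2 + βs * (δ1 - 1) * y - βb * δ1)
    (hk2max : ∀ y : ℝ, 0 < y → f y = 0 → y ≤ k2) :
    k2 > (βs / βb) ^ (-δ2 / (1 - δ2)) * (-δ2) / (1 - δ2) ∧
    C2 * δ2 * k2 ^ (δ2 - 1) + βs > 0 ∧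
    0 < (C2 * δ2 * k2 ^ (δ2 - 1) + βs) / (δ1 * k2 ^ (δ1 - 1)) := by
  have hβb : 0 < βb := hβs.trans hβ
  have hδ2neg : δ2 < 0 := hδ2 ▸ quadratic_root_sub_neg (div_pos (by linarith) hlam)
  have hδ1gt : 1 < δ1 := by
    have hsum : 4 * (1 + (μ1 - μ2) / lam) + 4 * (ρ - μ1) / lam = 4 + 4 * (ρ - μ2) / lam := by
      field_simp; ring
    have : 0 < 4 * (ρ - μ2) / lam := div_pos (by linarith) hlam
    exact hδ1 ▸ one_lt_quadratic_root_add (by linarith)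
  have hC2' : C2 = coeffC₂ βs βb δ2 := hC2
  subst hC2' hf
  obtain ⟨y, hmy, hy⟩ := exists_zero_gt_threshold hβs hβ hδ2neg hδ1gt
  have hm : 0 < threshold βs βb δ2 := threshold_pos hβs hβb hδ2neg
  have hk2 : threshold βs βb δ2 < k2 := hmy.trans_le (hk2max y (hm.trans hmy) hy)
  have hnum := coeffC₂_mul_rpow_add_pos hβs hβb hδ2neg hk2
  have hk2pos : 0 < k2 := hm.trans hk2
  exact ⟨hk2, hnum, div_pos hnum (mul_pos (by linarith) (Real.rpow_pos_of_pos hk2pos _))⟩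

/-- with k2 the larger zero of f on (0,∞), one has
k2 > (βs/βb)^{−δ2/(1−δ2)}·(−δ2)/(1−δ2), hence C2·δ2·k2^{δ2−1} + βs > 0, and in
particular C1 = (C2·δ2·k2^{δ2−1} + βs)/(δ1·k2^{δ1−1}) > 0. -/
theorem stmt_8 (lam ρ μ1 μ2 δ1 δ2 βs βb C2 k2 : ℝ)
    (hlam : 0 < lam) (hμ1 : μ1 < ρ) (hμ2 : μ2 < ρ)
    (hβs : 0 < βs) (hβ : βs < βb)
    (hδ1 : δ1 = (1 + (μ1 - μ2) / lam
      + Real.sqrt ((1 + (μ1 - μ2) / lam) ^ 2 + 4 * (ρ - μ1) / lam)) / 2)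
    (hδ2 : δ2 = (1 + (μ1 - μ2) / lam
      - Real.sqrt ((1 + (μ1 - μ2) / lam) ^ 2 + 4 * (ρ - μ1) / lam)) / 2)
    (hC2 : C2 = (βs / (1 - δ2)) ^ (1 - δ2) * (βb / (-δ2)) ^ δ2)
    (f : ℝ → ℝ)
    (hf : f = fun y : ℝ => C2 * (δ1 - δ2) * y ^ δ2 + βs * (δ1 - 1) * y - βb * δ1)
    (hk2pos : 0 < k2) (hk2zero : f k2 = 0)
    (hk2max : ∀ y : ℝ, 0 < y → f y = 0 → y ≤ k2) :
    k2 > (βs / βb) ^ (-δ2 / (1 - δ2)) * (-δ2) / (1 - δ2) ∧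
    C2 * δ2 * k2 ^ (δ2 - 1) + βs > 0 ∧
    0 < (C2 * δ2 * k2 ^ (δ2 - 1) + βs) / (δ1 * k2 ^ (δ1 - 1)) :=
  stmt_8_general lam ρ μ1 μ2 δ1 δ2 βs βb C2 k2 hlam hμ1 hμ2 hβs hβ hδ1 hδ2 hC2 f hf hk2max
end

section
/- Let k2 be the larger of the two zeros in (0,∞) of f(y) = C2·(δ1 − δ2)·y^{δ2} + βs·(δ1 − 1)·y − βb·δ1. Then f(((ρ−μ1)/(ρ−μ2))·(βb/βs)) < 0, hence k2 > ((ρ−μ1)/(ρ−μ2))·(βb/βs); consequently (ρ − μ2)·βs·y − (ρ − μ1)·βb ≥ 0 for every y ≥ k2. -/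
/-!
Put `t = -δ₂` and `A = (ρ-μ₁)/(ρ-μ₂) · βb/βs = δ₁ t /((δ₁-1)(1+t)) · βb/βs`. The linear part of `f`
at `A` equals `-βb δ₁/(1+t)`, while the power part simplifies to
`βs/(1+t) · (βs/βb)^{2t} · (1-1/δ₁)^t (δ₁+t)`. Since `βs < βb` and, by `1 + x ≤ eˣ`,
`(1-u)^t (1+tu) ≤ e^{-ut} e^{ut} = 1`, the power part is below `βb δ₁/(1+t)`, so `f(A) < 0`.
As `f(y) → ∞`, the intermediate value theorem gives a zero of `f` beyond `A`, hence `k₂ > A`.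
-/

open Real Set

lemma one_sub_rpow_mul_one_add_mul_le_one {u t : ℝ} (hu₀ : 0 ≤ u) (hu₁ : u ≤ 1) (ht : 0 ≤ t) :
    (1 - u) ^ t * (1 + t * u) ≤ 1 :=
  calc (1 - u) ^ t * (1 + t * u) ≤ exp (-u) ^ t * exp (t * u) := by
        gcongr <;> linarith [add_one_le_exp (-u), add_one_le_exp (t * u)]
    _ = 1 := by rw [← exp_mul, ← exp_add]; ring_nf; exact exp_zero

lemma rpow_one_sub_mul_rpow {P Q : ℝ} (hP : 0 < P) (hQ : 0 < Q) (d : ℝ) :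
    P ^ (1 - d) * Q ^ d = P * (P / Q) ^ (-d) := by
  rw [sub_eq_add_neg, rpow_add hP, rpow_one, div_rpow hP.le hQ.le, rpow_neg hQ.le, div_inv_eq_mul]
  ring

lemma add_and_mul_of_eq_quadratic_roots {b c x₁ x₂ : ℝ} (hc : 0 ≤ c)
    (hx₁ : x₁ = (b + √(b ^ 2 + 4 * c)) / 2) (hx₂ : x₂ = (b - √(b ^ 2 + 4 * c)) / 2) :
    x₁ + x₂ = b ∧ x₁ * x₂ = -c := by
  have hsq : √(b ^ 2 + 4 * c) ^ 2 = b ^ 2 + 4 * c := sq_sqrt (by positivity)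
  subst hx₁ hx₂
  constructor
  · ring
  · linear_combination (-1 / 4 : ℝ) * hsq

lemma delta_bounds_and_ratio {lam ρ μ1 μ2 δ1 δ2 : ℝ} (hlam : 0 < lam) (hμ1 : μ1 < ρ)
    (hμ2 : μ2 < ρ)
    (hδ1 : δ1 = (1 + (μ1 - μ2) / lam
      + Real.sqrt ((1 + (μ1 - μ2) / lam) ^ 2 + 4 * (ρ - μ1) / lam)) / 2)
    (hδ2 : δ2 = (1 + (μ1 - μ2) / lam
      - Real.sqrt ((1 + (μ1 - μ2) / lam) ^ 2 + 4 * (ρ - μ1) / lam)) / 2) :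
    1 < δ1 ∧ δ2 < 0 ∧ (ρ - μ1) / (ρ - μ2) = δ1 * -δ2 / ((δ1 - 1) * (1 - δ2)) := by
  have hc : 0 < (ρ - μ1) / lam := div_pos (by linarith) hlam
  rw [mul_div_assoc 4] at hδ1 hδ2
  obtain ⟨hsum, hprod⟩ := add_and_mul_of_eq_quadratic_roots hc.le hδ1 hδ2
  have hle : δ2 ≤ δ1 := by
    rw [hδ1, hδ2]; linarith [sqrt_nonneg ((1 + (μ1 - μ2) / lam) ^ 2 + 4 * ((ρ - μ1) / lam))]
  have hδ2 : δ2 < 0 := by nlinarith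
  have hden : (δ1 - 1) * (1 - δ2) = (ρ - μ2) / lam := by
    linear_combination hsum - hprod
  have hδ1 : 1 < δ1 := by
    have : 0 < (δ1 - 1) * (1 - δ2) := hden ▸ div_pos (by linarith) hlam
    nlinarith
  refine ⟨hδ1, hδ2, ?_⟩
  rw [hden, show δ1 * -δ2 = (ρ - μ1) / lam by linarith]
  field_simp

noncomputable def thresholdFn (C δ1 δ2 βs βb y : ℝ) : ℝ :=
  C * (δ1 - δ2) * y ^ δ2 + βs * (δ1 - 1) * y - βb * δ1

noncomputable def coeffC2 (δ2 βs βb : ℝ) : ℝ :=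
  (βs / (1 - δ2)) ^ (1 - δ2) * (βb / -δ2) ^ δ2

section

variable {δ1 δ2 βs βb : ℝ}

lemma coeffC2_nonneg (hδ2 : δ2 < 0) (hβs : 0 < βs) (hβb : 0 < βb) : 0 ≤ coeffC2 δ2 βs βb :=
  mul_nonneg (rpow_nonneg (div_pos hβs (by linarith)).le _)
    (rpow_nonneg (div_pos hβb (by linarith)).le _)

lemma coeffC2_mul_rpow_eq (hδ1 : 1 < δ1) (hδ2 : δ2 < 0) (hβs : 0 < βs) (hβb : 0 < βb) :
    coeffC2 δ2 βs βb * (δ1 * -δ2 / ((δ1 - 1) * (1 - δ2)) * (βb / βs)) ^ δ2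
      = βs / (1 - δ2) * ((βs / βb) ^ 2 * (1 - 1 / δ1)) ^ (-δ2) := by
  have ht : 0 < -δ2 := neg_pos.mpr hδ2
  have h1δ2 : 0 < 1 - δ2 := by linarith
  have hδ1' : 0 < δ1 - 1 := by linarith
  have hA : 0 < δ1 * -δ2 / ((δ1 - 1) * (1 - δ2)) * (βb / βs) := by positivity
  rw [coeffC2, mul_assoc, ← mul_rpow (by positivity) hA.le,
    rpow_one_sub_mul_rpow (by positivity) (by positivity)]
  congr 3
  field_simp [hδ2.ne]

lemma div_mul_rpow_mul_le (hδ1 : 1 < δ1) (hδ2 : δ2 < 0) (hβs : 0 < βs) (hβ : βs ≤ βb) :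
    βs / (1 - δ2) * ((βs / βb) ^ 2 * (1 - 1 / δ1)) ^ (-δ2) * (δ1 - δ2)
      ≤ βs * δ1 / (1 - δ2) := by
  have ht : 0 < -δ2 := neg_pos.mpr hδ2
  have h1δ2 : 0 < 1 - δ2 := by linarith
  have hβb : 0 < βb := hβs.trans_le hβ
  have hu : 1 / δ1 ≤ 1 := (div_le_one (by linarith)).mpr hδ1.le
  have hw : 0 ≤ 1 - 1 / δ1 := sub_nonneg.mpr hu
  have hratio : ((βs / βb) ^ 2) ^ (-δ2) ≤ 1 :=
    rpow_le_one (by positivity) (pow_le_one₀ (by positivity) ((div_le_one hβb).mpr hβ)) ht.le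
  have hbernoulli : (1 - 1 / δ1) ^ (-δ2) * (δ1 - δ2) ≤ δ1 := by
    have hδ1δ2 : δ1 - δ2 = δ1 * (1 + -δ2 * (1 / δ1)) := by field_simp; ring
    rw [hδ1δ2, mul_left_comm]
    exact mul_le_of_le_one_right (by linarith)
      (one_sub_rpow_mul_one_add_mul_le_one (by positivity) hu ht.le)
  calc βs / (1 - δ2) * ((βs / βb) ^ 2 * (1 - 1 / δ1)) ^ (-δ2) * (δ1 - δ2)
      = βs / (1 - δ2) * (((βs / βb) ^ 2) ^ (-δ2) * ((1 - 1 / δ1) ^ (-δ2) * (δ1 - δ2))) := by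
        rw [mul_rpow (by positivity) hw]; ring
    _ ≤ βs / (1 - δ2) * (1 * δ1) := by
        gcongr
        exact mul_nonneg (rpow_nonneg hw _) (by linarith)
    _ = βs * δ1 / (1 - δ2) := by ring

lemma thresholdFn_coeffC2_neg (hδ1 : 1 < δ1) (hδ2 : δ2 < 0) (hβs : 0 < βs) (hβ : βs < βb) :
    thresholdFn (coeffC2 δ2 βs βb) δ1 δ2 βs βb
      (δ1 * -δ2 / ((δ1 - 1) * (1 - δ2)) * (βb / βs)) < 0 := by
  have h1δ2 : 0 < 1 - δ2 := by linarith
  have hβb : 0 < βb := hβs.trans hβ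
  have hlinear : βs * (δ1 - 1) * (δ1 * -δ2 / ((δ1 - 1) * (1 - δ2)) * (βb / βs)) - βb * δ1
      = -(βb * δ1 / (1 - δ2)) := by
    field_simp [(by linarith : δ1 - 1 ≠ 0)]
    ring
  rw [thresholdFn, add_sub_assoc, hlinear, mul_right_comm _ (δ1 - δ2),
    coeffC2_mul_rpow_eq hδ1 hδ2 hβs hβb]
  calc _ ≤ βs * δ1 / (1 - δ2) - βb * δ1 / (1 - δ2) := by
        linarith [div_mul_rpow_mul_le hδ1 hδ2 hβs hβ.le]
    _ < 0 := by rw [sub_neg]; gcongr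

lemma exists_thresholdFn_eq_zero_gt {C a : ℝ} (hC : 0 ≤ C) (hδ1 : 1 < δ1) (hδ : δ2 ≤ δ1)
    (hβs : 0 < βs) (ha : 0 < a) (hfa : thresholdFn C δ1 δ2 βs βb a < 0) :
    ∃ c, a < c ∧ thresholdFn C δ1 δ2 βs βb c = 0 := by
  have hslope : 0 < βs * (δ1 - 1) := mul_pos hβs (by linarith)
  set b := max a (βb * δ1 / (βs * (δ1 - 1))) + 1
  have hab : a ≤ b := by linarith [le_max_left a (βb * δ1 / (βs * (δ1 - 1)))]
  have hfb : 0 < thresholdFn C δ1 δ2 βs βb b := by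
    have hlinear : βb * δ1 < βs * (δ1 - 1) * b := by
      rw [← div_lt_iff₀' hslope]
      linarith [le_max_right a (βb * δ1 / (βs * (δ1 - 1)))]
    have : 0 ≤ C * (δ1 - δ2) * b ^ δ2 :=
      mul_nonneg (mul_nonneg hC (by linarith)) (rpow_nonneg (ha.le.trans hab) _)
    unfold thresholdFn
    linarith
  have hcont : ContinuousOn (thresholdFn C δ1 δ2 βs βb) (Icc a b) := by
    intro x hx
    have hx0 : x ≠ 0 := (ha.trans_le hx.1).ne'
    apply ContinuousAt.continuousWithinAt
    show ContinuousAt (fun y => C * (δ1 - δ2) * y ^ δ2 + βs * (δ1 - 1) * y - βb * δ1) x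
    fun_prop (disch := exact Or.inl hx0)
  obtain ⟨c, hc, hfc⟩ := intermediate_value_Ioc hab hcont ⟨hfa, hfb.le⟩
  exact ⟨c, hc.1, hfc⟩

end

theorem stmt_9_general (lam ρ μ1 μ2 δ1 δ2 βs βb C2 k2 : ℝ)
    (hlam : 0 < lam) (hμ1 : μ1 < ρ) (hμ2 : μ2 < ρ)
    (hβs : 0 < βs) (hβ : βs < βb)
    (hδ1 : δ1 = (1 + (μ1 - μ2) / lam
      + Real.sqrt ((1 + (μ1 - μ2) / lam) ^ 2 + 4 * (ρ - μ1) / lam)) / 2)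
    (hδ2 : δ2 = (1 + (μ1 - μ2) / lam
      - Real.sqrt ((1 + (μ1 - μ2) / lam) ^ 2 + 4 * (ρ - μ1) / lam)) / 2)
    (hC2 : C2 = (βs / (1 - δ2)) ^ (1 - δ2) * (βb / (-δ2)) ^ δ2)
    (f : ℝ → ℝ)
    (hf : f = fun y : ℝ => C2 * (δ1 - δ2) * y ^ δ2 + βs * (δ1 - 1) * y - βb * δ1)
    (hk2max : ∀ y : ℝ, 0 < y → f y = 0 → y ≤ k2) :
    f ((ρ - μ1) / (ρ - μ2) * (βb / βs)) < 0 ∧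
    k2 > (ρ - μ1) / (ρ - μ2) * (βb / βs) ∧
    ∀ y : ℝ, k2 ≤ y → 0 ≤ (ρ - μ2) * βs * y - (ρ - μ1) * βb := by
  obtain ⟨hδ1gt, hδ2neg, hratio⟩ := delta_bounds_and_ratio hlam hμ1 hμ2 hδ1 hδ2
  have hβb : 0 < βb := hβs.trans hβ
  have hf' : f = thresholdFn (coeffC2 δ2 βs βb) δ1 δ2 βs βb := by
    rw [hf, hC2]; rfl
  set A := (ρ - μ1) / (ρ - μ2) * (βb / βs) with hA
  have hfA : f A < 0 := by
    rw [hf', hA, hratio]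
    exact thresholdFn_coeffC2_neg hδ1gt hδ2neg hβs hβ
  have hApos : 0 < A := mul_pos (div_pos (by linarith) (by linarith)) (div_pos hβb hβs)
  obtain ⟨c, hAc, hfc⟩ := exists_thresholdFn_eq_zero_gt (coeffC2_nonneg hδ2neg hβs hβb) hδ1gt
    (by linarith) hβs hApos (hf' ▸ hfA)
  have hk2 : A < k2 := hAc.trans_le (hk2max c (hApos.trans hAc) (hf' ▸ hfc))
  refine ⟨hfA, hk2, fun y hy => ?_⟩
  calc 0 = (ρ - μ2) * βs * A - (ρ - μ1) * βb := by
        rw [hA]; field_simp [(by linarith : ρ - μ2 ≠ 0)]; ring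
    _ ≤ (ρ - μ2) * βs * y - (ρ - μ1) * βb := by
        have : 0 < ρ - μ2 := by linarith
        gcongr
        exact (hk2.trans_le hy).le

/-- with k2 the larger zero of f on (0,∞),
f(((ρ−μ1)/(ρ−μ2))·(βb/βs)) < 0, hence k2 > ((ρ−μ1)/(ρ−μ2))·(βb/βs), and consequently
(ρ−μ2)·βs·y − (ρ−μ1)·βb ≥ 0 for every y ≥ k2. -/
theorem stmt_9 (lam ρ μ1 μ2 δ1 δ2 βs βb C2 k2 : ℝ)
    (hlam : 0 < lam) (hμ1 : μ1 < ρ) (hμ2 : μ2 < ρ)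
    (hβs : 0 < βs) (hβ : βs < βb)
    (hδ1 : δ1 = (1 + (μ1 - μ2) / lam
      + Real.sqrt ((1 + (μ1 - μ2) / lam) ^ 2 + 4 * (ρ - μ1) / lam)) / 2)
    (hδ2 : δ2 = (1 + (μ1 - μ2) / lam
      - Real.sqrt ((1 + (μ1 - μ2) / lam) ^ 2 + 4 * (ρ - μ1) / lam)) / 2)
    (hC2 : C2 = (βs / (1 - δ2)) ^ (1 - δ2) * (βb / (-δ2)) ^ δ2)
    (f : ℝ → ℝ)
    (hf : f = fun y : ℝ => C2 * (δ1 - δ2) * y ^ δ2 + βs * (δ1 - 1) * y - βb * δ1)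
    (hk2pos : 0 < k2) (hk2zero : f k2 = 0)
    (hk2max : ∀ y : ℝ, 0 < y → f y = 0 → y ≤ k2) :
    f ((ρ - μ1) / (ρ - μ2) * (βb / βs)) < 0 ∧
    k2 > (ρ - μ1) / (ρ - μ2) * (βb / βs) ∧
    ∀ y : ℝ, k2 ≤ y → 0 ≤ (ρ - μ2) * βs * y - (ρ - μ1) * βb :=
  stmt_9_general lam ρ μ1 μ2 δ1 δ2 βs βb C2 k2 hlam hμ1 hμ2 hβs hβ hδ1 hδ2 hC2 f hf hk2max
end

section
/- Let k1 = (βs/βb)·(−δ2)/(1 − δ2). Then for every y with 0 < y ≤ k1, one has (ρ − μ1)·βs − (ρ − μ2)·βb·y ≥ 0. Equivalently, k1 ≤ ((ρ−μ1)/(ρ−μ2))·(βs/βb). -/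
/-!
The root δ₂ solves `λ δ² - (λ + μ₁ - μ₂) δ = ρ - μ₁`, and substituting this
for `ρ - μ₁` turns `-δ₂ (ρ - μ₂) ≤ (ρ - μ₁) (1 - δ₂)` into `0 ≤ λ δ₂ (δ₂ - 1)`, which holds since
`δ₂ < 0`. Hence `-δ₂ / (1 - δ₂) ≤ (ρ - μ₁) / (ρ - μ₂)`; scaling by `βs / βb > 0` gives the bound on `k₁`,
and the sign claim follows by clearing denominators.
-/

lemma sub_sqrt_div_two_neg (b : ℝ) {q : ℝ} (hq : 0 < q) :
    (b - √(b ^ 2 + 4 * q)) / 2 < 0 := by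
  have hb : b < √(b ^ 2 + 4 * q) := by
    calc b ≤ |b| := le_abs_self b
      _ = √(b ^ 2) := (Real.sqrt_sq_eq_abs b).symm
      _ < √(b ^ 2 + 4 * q) := Real.sqrt_lt_sqrt (sq_nonneg b) (by linarith)
  linarith

lemma sub_sqrt_div_two_sq_sub_mul (b : ℝ) {q : ℝ} (hq : 0 ≤ q) :
    ((b - √(b ^ 2 + 4 * q)) / 2) ^ 2 - b * ((b - √(b ^ 2 + 4 * q)) / 2) = q := by
  have hs := Real.sq_sqrt (by positivity : 0 ≤ b ^ 2 + 4 * q)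
  linear_combination hs / 4

lemma neg_div_one_sub_le_div {lam ρ μ1 μ2 d : ℝ} (hlam : 0 < lam) (hμ2 : μ2 < ρ) (hd : d < 0)
    (hroot : lam * d ^ 2 - (lam + μ1 - μ2) * d = ρ - μ1) :
    -d / (1 - d) ≤ (ρ - μ1) / (ρ - μ2) := by
  rw [div_le_div_iff₀ (by linarith) (by linarith)]
  nlinarith [mul_pos (mul_pos hlam (neg_pos.2 hd)) (by linarith : (0 : ℝ) < 1 - d)]

lemma mul_mul_le_of_le_div_mul_div {a b c s y : ℝ} (hc : 0 < c) (hb : 0 < b)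
    (h : y ≤ a / c * (s / b)) : c * b * y ≤ a * s := by
  rw [div_mul_div_comm, le_div_iff₀ (mul_pos hc hb)] at h
  linarith

theorem stmt_10_general (lam ρ μ1 μ2 δ2 βs βb : ℝ)
    (hlam : 0 < lam) (hμ1 : μ1 < ρ) (hμ2 : μ2 < ρ)
    (hβs : 0 < βs) (hβ : βs < βb)
    (hδ2 : δ2 = (1 + (μ1 - μ2) / lam
      - Real.sqrt ((1 + (μ1 - μ2) / lam) ^ 2 + 4 * (ρ - μ1) / lam)) / 2) :
    (∀ y : ℝ, 0 < y → y ≤ (βs / βb) * (-δ2) / (1 - δ2) →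
      0 ≤ (ρ - μ1) * βs - (ρ - μ2) * βb * y) ∧
    (βs / βb) * (-δ2) / (1 - δ2) ≤ (ρ - μ1) / (ρ - μ2) * (βs / βb) := by
  rw [mul_div_assoc] at hδ2
  have hq : 0 < (ρ - μ1) / lam := div_pos (sub_pos.2 hμ1) hlam
  have hneg : δ2 < 0 := hδ2 ▸ sub_sqrt_div_two_neg _ hq
  have hroot : lam * δ2 ^ 2 - (lam + μ1 - μ2) * δ2 = ρ - μ1 := by
    have h := hδ2 ▸ sub_sqrt_div_two_sq_sub_mul (1 + (μ1 - μ2) / lam) hq.le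
    field_simp at h
    linear_combination h
  have hβb : 0 < βb := hβs.trans hβ
  have hk1 : (βs / βb) * (-δ2) / (1 - δ2) ≤ (ρ - μ1) / (ρ - μ2) * (βs / βb) := by
    rw [mul_div_assoc, mul_comm _ (βs / βb)]
    exact mul_le_mul_of_nonneg_left (neg_div_one_sub_le_div hlam hμ2 hneg hroot) (by positivity)
  exact ⟨fun y _ hy => sub_nonneg.2 <|
    mul_mul_le_of_le_div_mul_div (sub_pos.2 hμ2) hβb (hy.trans hk1), hk1⟩

/-- with k1 = (βs/βb)·(−δ2)/(1−δ2), for 0 < y ≤ k1 one has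
(ρ−μ1)·βs − (ρ−μ2)·βb·y ≥ 0; equivalently k1 ≤ ((ρ−μ1)/(ρ−μ2))·(βs/βb). -/
theorem stmt_10 (lam ρ μ1 μ2 δ1 δ2 βs βb : ℝ)
    (hlam : 0 < lam) (hμ1 : μ1 < ρ) (hμ2 : μ2 < ρ)
    (hβs : 0 < βs) (hβ : βs < βb)
    (hδ1 : δ1 = (1 + (μ1 - μ2) / lam
      + Real.sqrt ((1 + (μ1 - μ2) / lam) ^ 2 + 4 * (ρ - μ1) / lam)) / 2)
    (hδ2 : δ2 = (1 + (μ1 - μ2) / lam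
      - Real.sqrt ((1 + (μ1 - μ2) / lam) ^ 2 + 4 * (ρ - μ1) / lam)) / 2) :
    (∀ y : ℝ, 0 < y → y ≤ (βs / βb) * (-δ2) / (1 - δ2) →
      0 ≤ (ρ - μ1) * βs - (ρ - μ2) * βb * y) ∧
    (βs / βb) * (-δ2) / (1 - δ2) ≤ (ρ - μ1) / (ρ - μ2) * (βs / βb) :=
  stmt_10_general lam ρ μ1 μ2 δ2 βs βb hlam hμ1 hμ2 hβs hβ hδ2
end

section
/- Let k1 = (βs/βb)·(−δ2)/(1 − δ2) and define g(y) = C2·y^{δ2} + βb·y − βs for y > 0. Then g(k1) = 0, g'(y) ≥ 0 if and only if y ≥ k1, g is monotone nondecreasing on [k1, ∞), and consequently g(y) ≥ 0 for every y ≥ k1. -/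
/-!
Write `a = βs/(1-δ₂)` and `c = βb/(-δ₂)`, so that `k₁ = a/c` and `C₂ = a^(1-δ₂) c^δ₂`.
Then `C₂ k₁^δ₂ = a` and `C₂ (-δ₂) k₁^(δ₂-1) = (-δ₂) c = βb`, which give `g k₁ = 0` and
`g' k₁ = 0`. Since `δ₂ < 0`, the derivative `g' y = βb - C₂ (-δ₂) y^(δ₂-1)` is increasing in `y`,
so it is nonnegative exactly for `y ≥ k₁`; hence `g` increases on `[k₁, ∞)` from the value `0`.
-/

open Set

namespace Real

lemma rpow_one_sub_mul_rpow_mul_div_rpow {a c : ℝ} (ha : 0 < a) (hc : 0 < c) (δ : ℝ) :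
    a ^ (1 - δ) * c ^ δ * (a / c) ^ δ = a := by
  have hcδ : c ^ δ ≠ 0 := (rpow_pos_of_pos hc δ).ne'
  rw [div_rpow ha.le hc.le, mul_assoc, mul_div_cancel₀ _ hcδ, ← rpow_add ha]
  simp

lemma rpow_one_sub_mul_rpow_mul_div_rpow_sub_one {a c : ℝ} (ha : 0 < a) (hc : 0 < c) (δ : ℝ) :
    a ^ (1 - δ) * c ^ δ * (a / c) ^ (δ - 1) = c := by
  rw [rpow_sub_one (div_pos ha hc).ne', mul_div_assoc', rpow_one_sub_mul_rpow_mul_div_rpow ha hc]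
  field_simp

end Real

section RpowAffine

lemma hasDerivAt_rpow_affine (C δ b s : ℝ) {y : ℝ} (hy : y ≠ 0) :
    HasDerivAt (fun y : ℝ => C * y ^ δ + b * y - s) (C * (δ * y ^ (δ - 1)) + b) y := by
  simpa using (((Real.hasDerivAt_rpow_const (Or.inl hy)).const_mul C).add
    ((hasDerivAt_id y).const_mul b)).sub_const s

variable {C δ b k y : ℝ} (hC : 0 < C) (hδ : δ < 0) (hk : 0 < k) (hkb : C * (-δ) * k ^ (δ - 1) = b)
include hC hδ hk hkb

lemma rpow_affine_deriv_nonneg_iff (hy : 0 < y) : 0 ≤ C * (δ * y ^ (δ - 1)) + b ↔ k ≤ y := by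
  have hCδ : 0 < C * (-δ) := mul_pos hC (neg_pos.mpr hδ)
  have hfactor : C * (δ * y ^ (δ - 1)) + C * (-δ) * k ^ (δ - 1)
      = C * (-δ) * (k ^ (δ - 1) - y ^ (δ - 1)) := by ring
  rw [← hkb, hfactor, mul_nonneg_iff_of_pos_left hCδ, sub_nonneg,
    Real.rpow_le_rpow_iff_of_neg hy hk (by linarith)]

lemma monotoneOn_rpow_affine (s : ℝ) :
    MonotoneOn (fun y : ℝ => C * y ^ δ + b * y - s) (Ici k) := by
  have hderiv (y : ℝ) (hy : y ∈ Ici k) := hasDerivAt_rpow_affine C δ b s (hk.trans_le hy).ne'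
  refine monotoneOn_of_hasDerivWithinAt_nonneg (convex_Ici k)
    (continuousOn_of_forall_continuousAt fun y hy => (hderiv y hy).continuousAt)
    (fun y hy => (hderiv y (interior_subset hy)).hasDerivWithinAt) fun y hy => ?_
  rw [interior_Ici] at hy
  exact (rpow_affine_deriv_nonneg_iff hC hδ hk hkb (hk.trans hy)).mpr hy.le

end RpowAffine

theorem stmt_11_general (lam ρ μ1 μ2 δ2 βs βb C2 k1 : ℝ)
    (hlam : 0 < lam) (hμ1 : μ1 < ρ)
    (hβs : 0 < βs) (hβ : βs < βb)
    (hδ2 : δ2 = (1 + (μ1 - μ2) / lam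
      - Real.sqrt ((1 + (μ1 - μ2) / lam) ^ 2 + 4 * (ρ - μ1) / lam)) / 2)
    (hC2 : C2 = (βs / (1 - δ2)) ^ (1 - δ2) * (βb / (-δ2)) ^ δ2)
    (hk1 : k1 = (βs / βb) * (-δ2) / (1 - δ2))
    (g : ℝ → ℝ)
    (hg : g = fun y : ℝ => C2 * y ^ δ2 + βb * y - βs) :
    g k1 = 0 ∧
    (∀ y : ℝ, 0 < y → (0 ≤ deriv g y ↔ k1 ≤ y)) ∧
    MonotoneOn g (Set.Ici k1) ∧
    (∀ y : ℝ, k1 ≤ y → 0 ≤ g y) := by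
  have hβb : 0 < βb := hβs.trans hβ
  have hδ2neg : δ2 < 0 := by
    have := Real.lt_sqrt_of_sq_lt (x := 1 + (μ1 - μ2) / lam)
      (lt_add_of_pos_right _ (div_pos (by linarith : 0 < 4 * (ρ - μ1)) hlam))
    linarith
  have ha : 0 < βs / (1 - δ2) := div_pos hβs (by linarith)
  have hc : 0 < βb / (-δ2) := div_pos hβb (by linarith)
  have hk1_eq_div : k1 = (βs / (1 - δ2)) / (βb / (-δ2)) := by
    rw [hk1]
    field_simp
  have hk1pos : 0 < k1 := hk1_eq_div ▸ div_pos ha hc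
  have hC2pos : 0 < C2 := hC2 ▸ by positivity
  have hC2k1 : C2 * k1 ^ δ2 = βs / (1 - δ2) := by
    rw [hC2, hk1_eq_div, Real.rpow_one_sub_mul_rpow_mul_div_rpow ha hc]
  have hC2k1' : C2 * (-δ2) * k1 ^ (δ2 - 1) = βb := by
    rw [mul_right_comm, hC2, hk1_eq_div, Real.rpow_one_sub_mul_rpow_mul_div_rpow_sub_one ha hc]
    exact div_mul_cancel₀ _ (neg_ne_zero.mpr hδ2neg.ne)
  have hmono := monotoneOn_rpow_affine hC2pos hδ2neg hk1pos hC2k1' βs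
  subst hg
  have hgk1 : C2 * k1 ^ δ2 + βb * k1 - βs = 0 := by
    rw [hC2k1, hk1_eq_div]
    field_simp [(by linarith : 1 - δ2 ≠ 0)]
    ring
  refine ⟨hgk1, fun y hy => ?_, hmono, fun y hy => hgk1 ▸ hmono self_mem_Ici hy hy⟩
  rw [(hasDerivAt_rpow_affine C2 δ2 βb βs hy.ne').deriv]
  exact rpow_affine_deriv_nonneg_iff hC2pos hδ2neg hk1pos hC2k1' hy

/-- with k1 = (βs/βb)·(−δ2)/(1−δ2) and g(y) = C2·y^{δ2} + βb·y − βs,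
one has g(k1) = 0, for y > 0: g'(y) ≥ 0 iff y ≥ k1, g is monotone nondecreasing on
[k1,∞), and g(y) ≥ 0 for every y ≥ k1. -/
theorem stmt_11 (lam ρ μ1 μ2 δ1 δ2 βs βb C2 k1 : ℝ)
    (hlam : 0 < lam) (hμ1 : μ1 < ρ) (hμ2 : μ2 < ρ)
    (hβs : 0 < βs) (hβ : βs < βb)
    (hδ1 : δ1 = (1 + (μ1 - μ2) / lam
      + Real.sqrt ((1 + (μ1 - μ2) / lam) ^ 2 + 4 * (ρ - μ1) / lam)) / 2)
    (hδ2 : δ2 = (1 + (μ1 - μ2) / lam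
      - Real.sqrt ((1 + (μ1 - μ2) / lam) ^ 2 + 4 * (ρ - μ1) / lam)) / 2)
    (hC2 : C2 = (βs / (1 - δ2)) ^ (1 - δ2) * (βb / (-δ2)) ^ δ2)
    (hk1 : k1 = (βs / βb) * (-δ2) / (1 - δ2))
    (g : ℝ → ℝ)
    (hg : g = fun y : ℝ => C2 * y ^ δ2 + βb * y - βs) :
    g k1 = 0 ∧
    (∀ y : ℝ, 0 < y → (0 ≤ deriv g y ↔ k1 ≤ y)) ∧
    MonotoneOn g (Set.Ici k1) ∧
    (∀ y : ℝ, k1 ≤ y → 0 ≤ g y) :=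
  stmt_11_general lam ρ μ1 μ2 δ2 βs βb C2 k1 hlam hμ1 hβs hβ hδ2 hC2 hk1 g hg
end

section
/- Let k2 be the larger of the two zeros in (0,∞) of f(y) = C2·(δ1 − δ2)·y^{δ2} + βs·(δ1 − 1)·y − βb·δ1, so that k2 > y_c = [βs·(δ1 − 1)/(C2·(−δ2)·(δ1 − δ2))]^{1/(δ2 − 1)}. Then βs·(δ1 − 1)·k2^{−1} − C2·(−δ2)·(δ1 − δ2)·k2^{δ2−2} > 0. (With C1 = (C2·δ2·k2^{δ2−1} + βs)/(δ1·k2^{δ1−1}) and φ(y) = C1·y^{δ1} − C2·y^{δ2} + βb − βs·y, this quantity equals φ''(k2), so φ''(k2) > 0.) -/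
/-!
`δ₂ < 0` and `1 < δ₁` because `δ₁, δ₂` are the roots of `x² - p x - d/4`, with
`p = 1 + (μ₁ - μ₂)/λ` and `d = 4(ρ - μ₁)/λ`, a quadratic that is negative at `0` and at `1`.
With `a = βs(δ₁ - 1)` and `c = C₂(-δ₂)(δ₁ - δ₂)`, both positive, the quantity is
`k₂⁻¹ (a - c k₂^(δ₂-1))`; as `y ↦ y^(δ₂-1)` is strictly decreasing, `a - c y^(δ₂-1)` is positive
exactly for `y > y_c = (a/c)^(1/(δ₂-1))`.
-/

open Real

lemma sub_sqrt_sq_add_div_two_neg_s13 {p d : ℝ} (hd : 0 < d) : (p - √(p ^ 2 + d)) / 2 < 0 := by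
  have : p < √(p ^ 2 + d) := lt_sqrt_of_sq_lt (by linarith)
  linarith

lemma one_lt_add_sqrt_sq_add_div_two_s13 {p d : ℝ} (h : 4 < 4 * p + d) :
    1 < (p + √(p ^ 2 + d)) / 2 := by
  have : 2 - p < √(p ^ 2 + d) := lt_sqrt_of_sq_lt (by nlinarith)
  linarith

lemma mul_rpow_sub_two_lt_mul_inv {a c e k : ℝ} (ha : 0 < a) (hc : 0 < c) (he : e < 1)
    (hk : 0 < k) (h : (a / c) ^ (1 / (e - 1)) < k) : c * k ^ (e - 2) < a * k⁻¹ := by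
  have hpow : k ^ (e - 1) < a / c := by
    rwa [one_div, rpow_inv_lt_iff_of_neg (div_pos ha hc) hk (by linarith)] at h
  have hmul : c * k ^ (e - 1) < a := (lt_div_iff₀' hc).1 hpow
  calc c * k ^ (e - 2) = c * k ^ (e - 1) * k⁻¹ := by
        rw [show e - 2 = e - 1 - 1 by ring, rpow_sub_one hk.ne', div_eq_mul_inv, mul_assoc]
    _ < a * k⁻¹ := mul_lt_mul_of_pos_right hmul (inv_pos.2 hk)

theorem stmt_13_general (lam ρ μ1 μ2 δ1 δ2 βs βb C2 k2 yc : ℝ)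
    (hlam : 0 < lam) (hμ1 : μ1 < ρ) (hμ2 : μ2 < ρ)
    (hβs : 0 < βs) (hβ : βs < βb)
    (hδ1 : δ1 = (1 + (μ1 - μ2) / lam
      + Real.sqrt ((1 + (μ1 - μ2) / lam) ^ 2 + 4 * (ρ - μ1) / lam)) / 2)
    (hδ2 : δ2 = (1 + (μ1 - μ2) / lam
      - Real.sqrt ((1 + (μ1 - μ2) / lam) ^ 2 + 4 * (ρ - μ1) / lam)) / 2)
    (hC2 : C2 = (βs / (1 - δ2)) ^ (1 - δ2) * (βb / (-δ2)) ^ δ2)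
    (hyc : yc = (βs * (δ1 - 1) / (C2 * (-δ2) * (δ1 - δ2))) ^ (1 / (δ2 - 1)))
    (hk2pos : 0 < k2)
    (hk2yc : yc < k2) :
    0 < βs * (δ1 - 1) * k2⁻¹ - C2 * (-δ2) * (δ1 - δ2) * k2 ^ (δ2 - 2) := by
  have hδ2neg : δ2 < 0 :=
    hδ2 ▸ sub_sqrt_sq_add_div_two_neg_s13 (by have := sub_pos.2 hμ1; positivity)
  have hδ1gt : 1 < δ1 := by
    refine hδ1 ▸ one_lt_add_sqrt_sq_add_div_two_s13 ?_
    have : 0 < 4 * (ρ - μ2) / lam := by have := sub_pos.2 hμ2; positivity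
    linarith [show 4 * (1 + (μ1 - μ2) / lam) + 4 * (ρ - μ1) / lam = 4 + 4 * (ρ - μ2) / lam by
      ring]
  have hC2pos : 0 < C2 := by
    rw [hC2]
    have := div_pos hβs (by linarith : (0 : ℝ) < 1 - δ2)
    have := div_pos (hβs.trans hβ) (neg_pos.2 hδ2neg)
    positivity
  have ha : 0 < βs * (δ1 - 1) := mul_pos hβs (by linarith)
  have hc : 0 < C2 * (-δ2) * (δ1 - δ2) :=
    mul_pos (mul_pos hC2pos (neg_pos.2 hδ2neg)) (by linarith)
  exact sub_pos.2 (mul_rpow_sub_two_lt_mul_inv ha hc (by linarith) hk2pos (hyc ▸ hk2yc))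

/-- with k2 the larger zero of f on (0,∞) (so k2 > y_c),
βs·(δ1−1)·k2⁻¹ − C2·(−δ2)·(δ1−δ2)·k2^{δ2−2} > 0 (this quantity equals φ''(k2)). -/
theorem stmt_13 (lam ρ μ1 μ2 δ1 δ2 βs βb C2 k2 yc : ℝ)
    (hlam : 0 < lam) (hμ1 : μ1 < ρ) (hμ2 : μ2 < ρ)
    (hβs : 0 < βs) (hβ : βs < βb)
    (hδ1 : δ1 = (1 + (μ1 - μ2) / lam
      + Real.sqrt ((1 + (μ1 - μ2) / lam) ^ 2 + 4 * (ρ - μ1) / lam)) / 2)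
    (hδ2 : δ2 = (1 + (μ1 - μ2) / lam
      - Real.sqrt ((1 + (μ1 - μ2) / lam) ^ 2 + 4 * (ρ - μ1) / lam)) / 2)
    (hC2 : C2 = (βs / (1 - δ2)) ^ (1 - δ2) * (βb / (-δ2)) ^ δ2)
    (hyc : yc = (βs * (δ1 - 1) / (C2 * (-δ2) * (δ1 - δ2))) ^ (1 / (δ2 - 1)))
    (f : ℝ → ℝ)
    (hf : f = fun y : ℝ => C2 * (δ1 - δ2) * y ^ δ2 + βs * (δ1 - 1) * y - βb * δ1)
    (hk2pos : 0 < k2) (hk2zero : f k2 = 0)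
    (hk2max : ∀ y : ℝ, 0 < y → f y = 0 → y ≤ k2)
    (hk2yc : yc < k2) :
    0 < βs * (δ1 - 1) * k2⁻¹ - C2 * (-δ2) * (δ1 - δ2) * k2 ^ (δ2 - 2) :=
  stmt_13_general lam ρ μ1 μ2 δ1 δ2 βs βb C2 k2 yc hlam hμ1 hμ2 hβs hβ hδ1 hδ2 hC2 hyc hk2pos hk2yc
end

section
/- Let k1 = (βs/βb)·(−δ2)/(1 − δ2), let k2 be the larger of the two zeros in (0,∞) of f(y) = C2·(δ1 − δ2)·y^{δ2} + βs·(δ1 − 1)·y − βb·δ1, and set C1 = (C2·δ2·k2^{δ2−1} + βs)/(δ1·k2^{δ1−1}). Then for every y in the interval [k1, k2], one has C1·y^{δ1} − C2·y^{δ2} + βb − βs·y ≥ 0. -/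
/-!
Write `g y = C1 y^δ1 - C2 y^δ2 + βb - βs y`. The choice of `C1` is the smooth-fit condition
`g' k2 = 0`, and together with `f k2 = 0` it gives `g k2 = 0`. On `(0, ∞)` we have
`g' y = y^(δ2-1) u y` where `u' y = y^(-δ2) v y` with `v` increasing (this needs `C1 > 0`), so `u`
is quasiconvex. As `u k2 = 0`, once `g'` becomes nonpositive on `[k1, k2]` it stays so; hence `g`
is quasiconcave there and `g ≥ min (g k1) (g k2) = min (g k1) 0`. The point `k1` is where
`C2 k1^δ2 = βs / (1 - δ2)`, which makes `g k1 ≥ 0`.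

Positivity of `C1` amounts to `k2 > βb (-δ2) / (βs (1 - δ2))`: `f` is negative at that point and
tends to `+∞`, so it has a zero beyond it, and `k2` is the largest zero.
-/

open Set Filter

theorem mem_Ioo_of_sq_sub_lt {B D t : ℝ} (h : (2 * t - B) ^ 2 < D) :
    t ∈ Ioo ((B - √D) / 2) ((B + √D) / 2) := by
  have h₁ : 2 * t - B < √D := Real.lt_sqrt_of_sq_lt h
  have h₂ : B - 2 * t < √D := Real.lt_sqrt_of_sq_lt (by rwa [← neg_sub, neg_sq])
  constructor <;> linarith

theorem quasiconcaveOn_of_hasDerivAt {I : Set ℝ} (hI : I.OrdConnected) {g g' : ℝ → ℝ}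
    (hg : ∀ x ∈ I, HasDerivAt g (g' x) x)
    (hg' : ∀ x ∈ I, ∀ y ∈ I, x ≤ y → 0 < g' y → 0 < g' x) : QuasiconcaveOn ℝ I g := by
  have hcont : ContinuousOn g I := fun x hx ↦ (hg x hx).continuousAt.continuousWithinAt
  have hderiv : ∀ {a b}, a ∈ I → b ∈ I → ∀ x ∈ interior (Icc a b),
      HasDerivWithinAt g (g' x) (interior (Icc a b)) x := fun ha hb x hx ↦
    (hg x (hI.out ha hb (interior_subset hx))).hasDerivWithinAt
  intro r
  refine convex_iff_ordConnected.mpr ⟨fun x hx z hz y hy ↦ ?_⟩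
  have hyI : y ∈ I := hI.out hx.1 hz.1 hy
  refine ⟨hyI, ?_⟩
  rcases le_or_gt (g' y) 0 with hy' | hy'
  · have hanti : AntitoneOn g (Icc y z) :=
      antitoneOn_of_hasDerivWithinAt_nonpos (convex_Icc y z) (hcont.mono (hI.out hyI hz.1))
        (hderiv hyI hz.1) fun w hw ↦ by
          rw [interior_Icc] at hw
          exact not_lt.mp fun hw' ↦
            hy'.not_gt (hg' y hyI w (hI.out hyI hz.1 (Ioo_subset_Icc_self hw)) hw.1.le hw')
    exact hz.2.trans (hanti ⟨le_rfl, hy.2⟩ ⟨hy.2, le_rfl⟩ hy.2)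
  · have hmono : MonotoneOn g (Icc x y) :=
      monotoneOn_of_hasDerivWithinAt_nonneg (convex_Icc x y) (hcont.mono (hI.out hx.1 hyI))
        (hderiv hx.1 hyI) fun w hw ↦ by
          rw [interior_Icc] at hw
          exact (hg' w (hI.out hx.1 hyI (Ioo_subset_Icc_self hw)) y hyI hw.2.le hy').le
    exact hx.2.trans (hmono ⟨le_rfl, hy.1⟩ ⟨hy.1, le_rfl⟩ hy.1)

theorem quasiconvexOn_of_hasDerivAt_mul {I : Set ℝ} (hI : I.OrdConnected) {u p v : ℝ → ℝ}
    (hu : ∀ x ∈ I, HasDerivAt u (p x * v x) x) (hp : ∀ x ∈ I, 0 < p x) (hv : MonotoneOn v I) :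
    QuasiconvexOn ℝ I u := by
  have hneg : QuasiconcaveOn ℝ I (-u) := by
    refine quasiconcaveOn_of_hasDerivAt hI (fun x hx ↦ (hu x hx).neg) fun x hx y hy hxy h ↦ ?_
    have hvy : v y < 0 := neg_of_mul_neg_right (neg_pos.mp h) (hp y hy).le
    exact neg_pos.mpr (mul_neg_of_pos_of_neg (hp x hx) ((hv hx hy hxy).trans_lt hvy))
  intro r
  simpa only [Pi.neg_apply, neg_le_neg_iff] using hneg (-r)

theorem QuasiconcaveOn.min_le_of_mem_Icc {g : ℝ → ℝ} {a b y : ℝ}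
    (hg : QuasiconcaveOn ℝ (Icc a b) g) (hy : y ∈ Icc a b) : min (g a) (g b) ≤ g y :=
  ((convex_iff_ordConnected.mp (hg _)).out ⟨left_mem_Icc.mpr (hy.1.trans hy.2), min_le_left _ _⟩
    ⟨right_mem_Icc.mpr (hy.1.trans hy.2), min_le_right _ _⟩ hy).2

theorem Real.rpow_one_sub_mul_rpow_mul_div_rpow_s14 {A B : ℝ} (hA : 0 < A) (hB : 0 < B) (d : ℝ) :
    A ^ (1 - d) * B ^ d * (A / B) ^ d = A := by
  rw [Real.div_rpow hA.le hB.le, mul_assoc, mul_div_assoc', mul_div_cancel_left₀ _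
    (Real.rpow_pos_of_pos hB d).ne', ← Real.rpow_add hA, sub_add_cancel, Real.rpow_one]

noncomputable section

namespace SmoothFit

theorem characteristic_roots_bounds {lam ρ μ1 μ2 : ℝ} (hlam : 0 < lam) (hμ1 : μ1 < ρ)
    (hμ2 : μ2 < ρ) :
    (1 + (μ1 - μ2) / lam - √((1 + (μ1 - μ2) / lam) ^ 2 + 4 * (ρ - μ1) / lam)) / 2 < 0 ∧
      1 < (1 + (μ1 - μ2) / lam + √((1 + (μ1 - μ2) / lam) ^ 2 + 4 * (ρ - μ1) / lam)) / 2 := by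
  set S := 1 + (μ1 - μ2) / lam
  have h₁ : 0 < (ρ - μ1) / lam := div_pos (by linarith) hlam
  have h₂ : 0 < (ρ - μ2) / lam := div_pos (by linarith) hlam
  -- `0` and `1` lie strictly between the roots of `X ^ 2 - S X - (ρ - μ1) / lam`
  have h0 := mem_Ioo_of_sq_sub_lt (B := S) (D := S ^ 2 + 4 * (ρ - μ1) / lam) (t := 0)
    (by linarith [mul_div_assoc 4 (ρ - μ1) lam])
  have h1 := mem_Ioo_of_sq_sub_lt (B := S) (D := S ^ 2 + 4 * (ρ - μ1) / lam) (t := 1) (by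
    have : (2 * 1 - S) ^ 2 = S ^ 2 + 4 * (ρ - μ1) / lam - 4 * ((ρ - μ2) / lam) := by
      simp only [S]; field_simp; ring
    linarith)
  exact ⟨h0.1, h1.2⟩

variable (C1 C2 δ1 δ2 βb βs : ℝ)

def gap (y : ℝ) : ℝ := C1 * y ^ δ1 - C2 * y ^ δ2 + βb - βs * y

def gapSlope (y : ℝ) : ℝ := C1 * δ1 * y ^ (δ1 - δ2) - βs * y ^ (1 - δ2) - C2 * δ2

def fitEq (y : ℝ) : ℝ := C2 * (δ1 - δ2) * y ^ δ2 + βs * (δ1 - 1) * y - βb * δ1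

variable {C1 C2 δ1 δ2 βb βs}

theorem hasDerivAt_gap {x : ℝ} (hx : 0 < x) :
    HasDerivAt (gap C1 C2 δ1 δ2 βb βs) (x ^ (δ2 - 1) * gapSlope C1 C2 δ1 δ2 βs x) x := by
  have h := ((((Real.hasDerivAt_rpow_const (p := δ1) (Or.inl hx.ne')).const_mul C1).sub
    ((Real.hasDerivAt_rpow_const (p := δ2) (Or.inl hx.ne')).const_mul C2)).add_const βb).sub
    ((hasDerivAt_id x).const_mul βs)
  refine h.congr_deriv ?_
  have e₁ : x ^ (δ2 - 1) * x ^ (δ1 - δ2) = x ^ (δ1 - 1) := by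
    rw [← Real.rpow_add hx]; ring_nf
  have e₂ : x ^ (δ2 - 1) * x ^ (1 - δ2) = 1 := by
    rw [← Real.rpow_add hx]; norm_num
  simp only [gapSlope]
  linear_combination βs * e₂ - (C1 * δ1) * e₁

theorem hasDerivAt_gapSlope {x : ℝ} (hx : 0 < x) :
    HasDerivAt (gapSlope C1 C2 δ1 δ2 βs)
      (x ^ (-δ2) * (C1 * δ1 * (δ1 - δ2) * x ^ (δ1 - 1) - βs * (1 - δ2))) x := by
  have h := (((Real.hasDerivAt_rpow_const (p := δ1 - δ2) (Or.inl hx.ne')).const_mul (C1 * δ1)).sub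
    ((Real.hasDerivAt_rpow_const (p := 1 - δ2) (Or.inl hx.ne')).const_mul βs)).sub_const (C2 * δ2)
  refine h.congr_deriv ?_
  have e₁ : x ^ (-δ2) * x ^ (δ1 - 1) = x ^ (δ1 - δ2 - 1) := by
    rw [← Real.rpow_add hx]; ring_nf
  rw [show 1 - δ2 - 1 = -δ2 by ring]
  linear_combination -(C1 * δ1 * (δ1 - δ2)) * e₁

theorem quasiconvexOn_gapSlope (hC1 : 0 ≤ C1) (hδ1 : 1 ≤ δ1) (hδ : δ2 ≤ δ1) :
    QuasiconvexOn ℝ (Ioi 0) (gapSlope C1 C2 δ1 δ2 βs) := by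
  refine quasiconvexOn_of_hasDerivAt_mul ordConnected_Ioi (fun x hx ↦ hasDerivAt_gapSlope hx)
    (fun x hx ↦ Real.rpow_pos_of_pos hx _) fun x hx y _ hxy ↦ ?_
  have : x ^ (δ1 - 1) ≤ y ^ (δ1 - 1) := Real.rpow_le_rpow (le_of_lt hx) hxy (by linarith)
  have : 0 ≤ C1 * δ1 * (δ1 - δ2) := mul_nonneg (mul_nonneg hC1 (by linarith)) (by linarith)
  gcongr

theorem quasiconcaveOn_gap (hC1 : 0 ≤ C1) (hδ1 : 1 ≤ δ1) (hδ : δ2 ≤ δ1) {a k : ℝ} (ha : 0 < a)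
    (hk : gapSlope C1 C2 δ1 δ2 βs k = 0) : QuasiconcaveOn ℝ (Icc a k) (gap C1 C2 δ1 δ2 βb βs) := by
  refine quasiconcaveOn_of_hasDerivAt ordConnected_Icc
    (fun x hx ↦ hasDerivAt_gap (ha.trans_le hx.1)) fun x hx y hy hxy h ↦ ?_
  have hx0 : 0 < x := ha.trans_le hx.1
  refine mul_pos (Real.rpow_pos_of_pos hx0 _) (not_le.mp fun hx' ↦ ?_)
  have hy' : gapSlope C1 C2 δ1 δ2 βs y ≤ 0 :=
    ((convex_iff_ordConnected.mp ((quasiconvexOn_gapSlope hC1 hδ1 hδ) 0)).out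
      ⟨hx0, hx'⟩ ⟨hx0.trans_le (hxy.trans hy.2), hk.le⟩ ⟨hxy, hy.2⟩).2
  exact (pos_of_mul_pos_right h (Real.rpow_pos_of_pos (hx0.trans_le hxy) _).le).not_ge hy'


theorem fitEq_neg (hδ2 : δ2 < 0) (hδ1 : 1 < δ1) (hβs : 0 < βs) (hβ : βs < βb) (hC2 : 0 < C2)
    {k1 : ℝ} (hk1 : k1 = βs / βb * (-δ2) / (1 - δ2)) (hC2k1 : C2 * k1 ^ δ2 = βs / (1 - δ2)) :
    fitEq C2 δ1 δ2 βb βs (βb * (-δ2) / (βs * (1 - δ2))) < 0 := by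
  set t := βb * (-δ2) / (βs * (1 - δ2))
  have hβb : 0 < βb := hβs.trans hβ
  have h1δ2 : 0 < 1 - δ2 := by linarith
  have hk1pos : 0 < k1 := by
    rw [hk1]; exact div_pos (mul_pos (div_pos hβs hβb) (by linarith)) h1δ2
  have hk1t : k1 < t := by
    rw [hk1, div_lt_div_iff₀ h1δ2 (mul_pos hβs h1δ2)]
    have : βs / βb * βs < βb := by rw [div_mul_eq_mul_div, div_lt_iff₀ hβb]; nlinarith
    nlinarith [mul_lt_mul_of_pos_right this (mul_pos (neg_pos.mpr hδ2) h1δ2)]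
  have hC2t : C2 * t ^ δ2 < βs / (1 - δ2) :=
    hC2k1 ▸ mul_lt_mul_of_pos_left (Real.rpow_lt_rpow_of_neg hk1pos hk1t hδ2) hC2
  have ht : βs * t * (1 - δ2) = βb * (-δ2) := by simp only [t]; field_simp
  rw [lt_div_iff₀ h1δ2] at hC2t
  have hscaled : fitEq C2 δ1 δ2 βb βs t * (1 - δ2) < (δ1 - δ2) * (βs - βb) := by
    simp only [fitEq]
    nlinarith [mul_lt_mul_of_pos_left hC2t (show 0 < δ1 - δ2 by linarith)]
  nlinarith [mul_pos (show 0 < δ1 - δ2 by linarith) (sub_pos.mpr hβ)]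

theorem tendsto_fitEq_atTop (hC2 : 0 ≤ C2) (hδ : δ2 ≤ δ1) (hδ1 : 1 < δ1) (hβs : 0 < βs) :
    Tendsto (fitEq C2 δ1 δ2 βb βs) atTop atTop := by
  refine tendsto_atTop_mono' atTop ?_ (tendsto_atTop_add_const_right _ (-(βb * δ1))
    (tendsto_id.const_mul_atTop (mul_pos hβs (sub_pos.mpr hδ1))))
  filter_upwards [eventually_ge_atTop 0] with y hy
  have : 0 ≤ C2 * (δ1 - δ2) * y ^ δ2 :=
    mul_nonneg (mul_nonneg hC2 (sub_nonneg.mpr hδ)) (Real.rpow_nonneg hy _)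
  simp only [fitEq, id]
  linarith

theorem lt_of_fitEq_neg (hC2 : 0 ≤ C2) (hδ : δ2 ≤ δ1) (hδ1 : 1 < δ1) (hβs : 0 < βs) {a k : ℝ}
    (ha : 0 < a) (hfa : fitEq C2 δ1 δ2 βb βs a < 0)
    (hk : ∀ y, 0 < y → fitEq C2 δ1 δ2 βb βs y = 0 → y ≤ k) : a < k := by
  have hcont : ContinuousOn (fitEq C2 δ1 δ2 βb βs) (Ici a) := fun x hx ↦
    (((continuousAt_const.mul (Real.continuousAt_rpow_const x δ2
      (Or.inl (ha.trans_le hx).ne'))).add (continuousAt_const.mul continuousAt_id)).sub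
      continuousAt_const).continuousWithinAt
  obtain ⟨z, hz, hz0⟩ := intermediate_value_Ioi hcont (tendsto_fitEq_atTop hC2 hδ hδ1 hβs)
    (show 0 ∈ Ioi _ from hfa)
  exact hz.trans_le (hk z (ha.trans hz) hz0)

theorem smooth_fit {k : ℝ} (hk : 0 < k) (hδ1 : δ1 ≠ 0)
    (hC1 : C1 = (C2 * δ2 * k ^ (δ2 - 1) + βs) / (δ1 * k ^ (δ1 - 1))) :
    C1 * δ1 * k ^ δ1 = C2 * δ2 * k ^ δ2 + βs * k := by
  have e₁ : k ^ (δ1 - 1) * k = k ^ δ1 := by rw [← Real.rpow_add_one hk.ne', sub_add_cancel]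
  have e₂ : k ^ (δ2 - 1) * k = k ^ δ2 := by rw [← Real.rpow_add_one hk.ne', sub_add_cancel]
  rw [hC1, ← e₁, ← e₂]
  field_simp

theorem gapSlope_eq_zero {k : ℝ} (hk : 0 < k)
    (hfit : C1 * δ1 * k ^ δ1 = C2 * δ2 * k ^ δ2 + βs * k) : gapSlope C1 C2 δ1 δ2 βs k = 0 := by
  have e₁ : k ^ (δ1 - δ2) * k ^ δ2 = k ^ δ1 := by rw [← Real.rpow_add hk, sub_add_cancel]
  have e₂ : k ^ (1 - δ2) * k ^ δ2 = k := by rw [← Real.rpow_add hk, sub_add_cancel, Real.rpow_one]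
  have hpos : 0 < k ^ δ2 := Real.rpow_pos_of_pos hk δ2
  refine (mul_eq_zero.mp (?_ : gapSlope C1 C2 δ1 δ2 βs k * k ^ δ2 = 0)).resolve_right hpos.ne'
  simp only [gapSlope]
  linear_combination (C1 * δ1) * e₁ - βs * e₂ + hfit

theorem gap_eq_zero {k : ℝ} (hδ1 : δ1 ≠ 0)
    (hfit : C1 * δ1 * k ^ δ1 = C2 * δ2 * k ^ δ2 + βs * k) (hk : fitEq C2 δ1 δ2 βb βs k = 0) :
    gap C1 C2 δ1 δ2 βb βs k = 0 := by
  refine (mul_eq_zero.mp (?_ : δ1 * gap C1 C2 δ1 δ2 βb βs k = 0)).resolve_left hδ1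
  simp only [gap, fitEq] at hk ⊢
  linear_combination hfit - hk

theorem pos_of_smooth_fit {k : ℝ} (hk : 0 < k) (hδ2 : δ2 < 0) (hδ1 : 0 < δ1) (hβs : 0 < βs)
    (hfit : C1 * δ1 * k ^ δ1 = C2 * δ2 * k ^ δ2 + βs * k) (hf : fitEq C2 δ1 δ2 βb βs k = 0)
    (hkt : βb * (-δ2) / (βs * (1 - δ2)) < k) : 0 < C1 := by
  rw [div_lt_iff₀ (mul_pos hβs (by linarith))] at hkt
  have h : δ1 * (C1 * ((δ1 - δ2) * k ^ δ1)) = δ1 * (βs * (1 - δ2) * k + δ2 * βb) := by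
    simp only [fitEq] at hf
    linear_combination (δ1 - δ2) * hfit + δ2 * hf
  have hpos : 0 < C1 * ((δ1 - δ2) * k ^ δ1) := by
    rw [mul_left_cancel₀ hδ1.ne' h]; linarith
  exact pos_of_mul_pos_left hpos (mul_pos (by linarith) (Real.rpow_pos_of_pos hk _)).le

theorem gap_nonneg_at_k1 (hC1 : 0 ≤ C1) (hδ2 : δ2 < 0) (hβs : 0 < βs) (hβ : βs < βb) {k1 : ℝ}
    (hk1 : k1 = βs / βb * (-δ2) / (1 - δ2)) (hk1pos : 0 < k1)
    (hC2k1 : C2 * k1 ^ δ2 = βs / (1 - δ2)) : 0 ≤ gap C1 C2 δ1 δ2 βb βs k1 := by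
  have hβb : 0 < βb := hβs.trans hβ
  have h1δ2 : 0 < 1 - δ2 := by linarith
  have hk1' : βs * k1 * βb * (1 - δ2) = βs * βs * (-δ2) := by rw [hk1]; field_simp
  have h : βs / (1 - δ2) + βs * k1 ≤ βb := by
    rw [div_add' _ _ _ h1δ2.ne', div_le_iff₀ h1δ2]
    nlinarith [mul_pos (sub_pos.mpr hβ) (show 0 < βb + βs by linarith)]
  have := mul_nonneg hC1 (Real.rpow_nonneg hk1pos.le δ1)
  simp only [gap]
  linarith

end SmoothFit

end

open SmoothFit in
/-- with k1 = (βs/βb)·(−δ2)/(1−δ2), k2 the larger zero of f on (0,∞),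
and C1 = (C2·δ2·k2^{δ2−1} + βs)/(δ1·k2^{δ1−1}), for every y ∈ [k1, k2] one has
C1·y^{δ1} − C2·y^{δ2} + βb − βs·y ≥ 0. -/
theorem stmt_14 (lam ρ μ1 μ2 δ1 δ2 βs βb C2 k1 k2 C1 : ℝ)
    (hlam : 0 < lam) (hμ1 : μ1 < ρ) (hμ2 : μ2 < ρ)
    (hβs : 0 < βs) (hβ : βs < βb)
    (hδ1 : δ1 = (1 + (μ1 - μ2) / lam
      + Real.sqrt ((1 + (μ1 - μ2) / lam) ^ 2 + 4 * (ρ - μ1) / lam)) / 2)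
    (hδ2 : δ2 = (1 + (μ1 - μ2) / lam
      - Real.sqrt ((1 + (μ1 - μ2) / lam) ^ 2 + 4 * (ρ - μ1) / lam)) / 2)
    (hC2 : C2 = (βs / (1 - δ2)) ^ (1 - δ2) * (βb / (-δ2)) ^ δ2)
    (hk1 : k1 = (βs / βb) * (-δ2) / (1 - δ2))
    (f : ℝ → ℝ)
    (hf : f = fun y : ℝ => C2 * (δ1 - δ2) * y ^ δ2 + βs * (δ1 - 1) * y - βb * δ1)
    (hk2pos : 0 < k2) (hk2zero : f k2 = 0)
    (hk2max : ∀ y : ℝ, 0 < y → f y = 0 → y ≤ k2)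
    (hC1 : C1 = (C2 * δ2 * k2 ^ (δ2 - 1) + βs) / (δ1 * k2 ^ (δ1 - 1))) :
    ∀ y ∈ Set.Icc k1 k2, 0 ≤ C1 * y ^ δ1 - C2 * y ^ δ2 + βb - βs * y := by
  obtain ⟨hδ2neg, hδ1gt⟩ : δ2 < 0 ∧ 1 < δ1 := by
    rw [hδ1, hδ2]; exact characteristic_roots_bounds hlam hμ1 hμ2
  have hβb : 0 < βb := hβs.trans hβ
  have hA : 0 < βs / (1 - δ2) := div_pos hβs (by linarith)
  have hB : 0 < βb / (-δ2) := div_pos hβb (by linarith)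
  have hk1AB : k1 = βs / (1 - δ2) / (βb / (-δ2)) := by rw [hk1]; field_simp
  have hk1pos : 0 < k1 := hk1AB ▸ div_pos hA hB
  have hC2pos : 0 < C2 := hC2 ▸ mul_pos (Real.rpow_pos_of_pos hA _) (Real.rpow_pos_of_pos hB _)
  have hC2k1 : C2 * k1 ^ δ2 = βs / (1 - δ2) := by
    rw [hC2, hk1AB]; exact Real.rpow_one_sub_mul_rpow_mul_div_rpow_s14 hA hB δ2
  subst hf
  have hkt : βb * (-δ2) / (βs * (1 - δ2)) < k2 :=
    lt_of_fitEq_neg hC2pos.le (by linarith) hδ1gt hβs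
      (div_pos (mul_pos hβb (by linarith)) (mul_pos hβs (by linarith)))
      (fitEq_neg hδ2neg hδ1gt hβs hβ hC2pos hk1 hC2k1) hk2max
  have hfit := smooth_fit hk2pos (by linarith) hC1
  have hC1pos : 0 < C1 := pos_of_smooth_fit hk2pos hδ2neg (by linarith) hβs hfit hk2zero hkt
  intro y hy
  have hmin := (quasiconcaveOn_gap (βb := βb) hC1pos.le hδ1gt.le (by linarith) hk1pos
    (gapSlope_eq_zero hk2pos hfit)).min_le_of_mem_Icc hy
  rw [gap_eq_zero (by linarith) hfit hk2zero] at hmin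
  exact (le_min (gap_nonneg_at_k1 hC1pos.le hδ2neg hβs hβ hk1 hk1pos hC2k1) le_rfl).trans hmin
end

section
/- Let k2 be the larger of the two zeros in (0,∞) of f(y) = C2·(δ1 − δ2)·y^{δ2} + βs·(δ1 − 1)·y − βb·δ1 and set C1 = (C2·δ2·k2^{δ2−1} + βs)/(δ1·k2^{δ1−1}), so that C1 > 0. Define w0(y) = C2·y^{δ2} − βb + βs·y for y ≥ k2. Then w0(k2) = C1·k2^{δ1} > 0, w0'(k2) = C1·δ1·k2^{δ1−1} > 0, w0''(y) > 0 for all y > 0, and consequently w0 is strictly increasing and strictly positive on [k2, ∞); in particular C2·y^{δ2} − βb + βs·y > 0 for every y ≥ k2. -/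
/-!
`δ1, δ2` are the roots of `x² - a x - b` with `b > 0`, so `δ2 < 0 < δ1`, and then `C2 > 0`.
Hence `w0'(y) = C2 δ2 y^(δ2-1) + βs` is increasing; by smooth fit it is positive at `k2`, so
`w0` increases on `[k2, ∞)` from the positive value `w0 k2 = C1 k2^δ1`.
-/

open Real Set

theorem abs_lt_sqrt_sq_add_s15 {a b : ℝ} (hb : 0 < b) : |a| < √(a ^ 2 + b) := by
  rw [← sqrt_sq_eq_abs]
  exact sqrt_lt_sqrt (sq_nonneg a) (by linarith)

theorem sub_sqrt_sq_add_neg {a b : ℝ} (hb : 0 < b) : a - √(a ^ 2 + b) < 0 := by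
  linarith [le_abs_self a, abs_lt_sqrt_sq_add_s15 (a := a) hb]

theorem add_sqrt_sq_add_pos {a b : ℝ} (hb : 0 < b) : 0 < a + √(a ^ 2 + b) := by
  linarith [neg_abs_le a, abs_lt_sqrt_sq_add_s15 (a := a) hb]

section RpowSubAddMul

variable {C δ β γ : ℝ}

theorem hasDerivAt_rpow_sub_add_mul {y : ℝ} (hy : y ≠ 0) :
    HasDerivAt (fun y : ℝ => C * y ^ δ - β + γ * y) (C * δ * y ^ (δ - 1) + γ) y := by
  have := (((hasDerivAt_rpow_const (p := δ) (Or.inl hy)).const_mul C).sub_const β).add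
    ((hasDerivAt_id y).const_mul γ)
  exact this.congr_deriv (by simp [mul_assoc])

theorem deriv_deriv_rpow_sub_add_mul_pos (hC : 0 < C) (hδ : δ < 0) {y : ℝ} (hy : 0 < y) :
    0 < deriv (deriv fun y : ℝ => C * y ^ δ - β + γ * y) y := by
  have hderiv : deriv (fun y : ℝ => C * y ^ δ - β + γ * y)
      =ᶠ[nhds y] fun y => C * δ * y ^ (δ - 1) + γ :=
    eventually_gt_nhds hy |>.mono fun z hz => (hasDerivAt_rpow_sub_add_mul hz.ne').deriv
  rw [hderiv.deriv_eq, (((hasDerivAt_rpow_const (p := δ - 1) (Or.inl hy.ne')).const_mul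
    (C * δ)).add_const γ).deriv]
  have hcoef : 0 < C * δ * (δ - 1) := mul_pos_of_neg_of_neg (by nlinarith) (by linarith)
  have := mul_pos hcoef (rpow_pos_of_pos hy (δ - 1 - 1))
  linarith

theorem strictMonoOn_rpow_sub_add_mul (hC : 0 < C) (hδ : δ < 0) {k : ℝ} (hk : 0 < k)
    (hslope : 0 < C * δ * k ^ (δ - 1) + γ) :
    StrictMonoOn (fun y : ℝ => C * y ^ δ - β + γ * y) (Ici k) := by
  have hd : ∀ y ∈ Ici k, HasDerivAt (fun y : ℝ => C * y ^ δ - β + γ * y)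
      (C * δ * y ^ (δ - 1) + γ) y :=
    fun y hy => hasDerivAt_rpow_sub_add_mul (hk.trans_le hy).ne'
  refine strictMonoOn_of_deriv_pos (convex_Ici k)
    (fun y hy => (hd y hy).continuousAt.continuousWithinAt) fun y hy => ?_
  rw [interior_Ici] at hy
  rw [(hd y (mem_Ici.2 hy.le)).deriv]
  have hpow : y ^ (δ - 1) ≤ k ^ (δ - 1) := rpow_le_rpow_of_nonpos hk hy.le (by linarith)
  have hCδ : C * δ < 0 := mul_neg_of_pos_of_neg hC hδ
  nlinarith

end RpowSubAddMul

theorem stmt_15_general (lam ρ μ1 μ2 δ1 δ2 βs βb C2 k2 C1 : ℝ)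
    (hlam : 0 < lam) (hμ1 : μ1 < ρ)
    (hβs : 0 < βs) (hβ : βs < βb)
    (hδ1 : δ1 = (1 + (μ1 - μ2) / lam
      + Real.sqrt ((1 + (μ1 - μ2) / lam) ^ 2 + 4 * (ρ - μ1) / lam)) / 2)
    (hδ2 : δ2 = (1 + (μ1 - μ2) / lam
      - Real.sqrt ((1 + (μ1 - μ2) / lam) ^ 2 + 4 * (ρ - μ1) / lam)) / 2)
    (hC2 : C2 = (βs / (1 - δ2)) ^ (1 - δ2) * (βb / (-δ2)) ^ δ2)
    (hk2pos : 0 < k2)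
    (hC1pos : 0 < C1)
    (hfit1 : C1 * k2 ^ δ1 = C2 * k2 ^ δ2 - βb + βs * k2)
    (hfit2 : C1 * δ1 * k2 ^ (δ1 - 1) = C2 * δ2 * k2 ^ (δ2 - 1) + βs)
    (w0 : ℝ → ℝ)
    (hw0 : w0 = fun y : ℝ => C2 * y ^ δ2 - βb + βs * y) :
    w0 k2 = C1 * k2 ^ δ1 ∧ 0 < C1 * k2 ^ δ1 ∧
    deriv w0 k2 = C1 * δ1 * k2 ^ (δ1 - 1) ∧ 0 < C1 * δ1 * k2 ^ (δ1 - 1) ∧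
    (∀ y : ℝ, 0 < y → 0 < deriv (deriv w0) y) ∧
    StrictMonoOn w0 (Set.Ici k2) ∧
    (∀ y : ℝ, k2 ≤ y → 0 < C2 * y ^ δ2 - βb + βs * y) := by
  subst hw0
  have hdisc : 0 < 4 * (ρ - μ1) / lam := div_pos (by linarith) hlam
  have hδ1pos : 0 < δ1 := hδ1 ▸ half_pos (add_sqrt_sq_add_pos hdisc)
  have hδ2neg : δ2 < 0 := hδ2 ▸ div_neg_of_neg_of_pos (sub_sqrt_sq_add_neg hdisc) two_pos
  have hC2pos : 0 < C2 := hC2 ▸ mul_pos (rpow_pos_of_pos (div_pos hβs (by linarith)) _)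
    (rpow_pos_of_pos (div_pos (by linarith) (by linarith)) _)
  have hvalue : 0 < C1 * k2 ^ δ1 := by positivity
  have hslope : 0 < C1 * δ1 * k2 ^ (δ1 - 1) := by positivity
  have hmono := strictMonoOn_rpow_sub_add_mul (β := βb) hC2pos hδ2neg hk2pos (hfit2 ▸ hslope)
  refine ⟨hfit1.symm, hvalue, (hasDerivAt_rpow_sub_add_mul hk2pos.ne').deriv.trans hfit2.symm,
    hslope, fun y hy => deriv_deriv_rpow_sub_add_mul_pos hC2pos hδ2neg hy, hmono,
    fun y hy => ?_⟩
  exact hvalue.trans_le (hfit1 ▸ hmono.monotoneOn self_mem_Ici hy hy)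

/-- with k2 the larger zero of f, C1 = (C2·δ2·k2^{δ2−1} + βs)/(δ1·k2^{δ1−1})
(so C1 > 0), and w0(y) = C2·y^{δ2} − βb + βs·y: w0(k2) = C1·k2^{δ1} > 0,
w0'(k2) = C1·δ1·k2^{δ1−1} > 0, w0''(y) > 0 for all y > 0, w0 is strictly increasing on
[k2,∞), and C2·y^{δ2} − βb + βs·y > 0 for every y ≥ k2. -/
theorem stmt_15 (lam ρ μ1 μ2 δ1 δ2 βs βb C2 k2 C1 : ℝ)
    (hlam : 0 < lam) (hμ1 : μ1 < ρ) (hμ2 : μ2 < ρ)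
    (hβs : 0 < βs) (hβ : βs < βb)
    (hδ1 : δ1 = (1 + (μ1 - μ2) / lam
      + Real.sqrt ((1 + (μ1 - μ2) / lam) ^ 2 + 4 * (ρ - μ1) / lam)) / 2)
    (hδ2 : δ2 = (1 + (μ1 - μ2) / lam
      - Real.sqrt ((1 + (μ1 - μ2) / lam) ^ 2 + 4 * (ρ - μ1) / lam)) / 2)
    (hC2 : C2 = (βs / (1 - δ2)) ^ (1 - δ2) * (βb / (-δ2)) ^ δ2)
    (f : ℝ → ℝ)
    (hf : f = fun y : ℝ => C2 * (δ1 - δ2) * y ^ δ2 + βs * (δ1 - 1) * y - βb * δ1)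
    (hk2pos : 0 < k2) (hk2zero : f k2 = 0)
    (hk2max : ∀ y : ℝ, 0 < y → f y = 0 → y ≤ k2)
    (hC1 : C1 = (C2 * δ2 * k2 ^ (δ2 - 1) + βs) / (δ1 * k2 ^ (δ1 - 1)))
    (hC1pos : 0 < C1)
    (hfit1 : C1 * k2 ^ δ1 = C2 * k2 ^ δ2 - βb + βs * k2)
    (hfit2 : C1 * δ1 * k2 ^ (δ1 - 1) = C2 * δ2 * k2 ^ (δ2 - 1) + βs)
    (w0 : ℝ → ℝ)
    (hw0 : w0 = fun y : ℝ => C2 * y ^ δ2 - βb + βs * y) :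
    w0 k2 = C1 * k2 ^ δ1 ∧ 0 < C1 * k2 ^ δ1 ∧
    deriv w0 k2 = C1 * δ1 * k2 ^ (δ1 - 1) ∧ 0 < C1 * δ1 * k2 ^ (δ1 - 1) ∧
    (∀ y : ℝ, 0 < y → 0 < deriv (deriv w0) y) ∧
    StrictMonoOn w0 (Set.Ici k2) ∧
    (∀ y : ℝ, k2 ≤ y → 0 < C2 * y ^ δ2 - βb + βs * y) :=
  stmt_15_general lam ρ μ1 μ2 δ1 δ2 βs βb C2 k2 C1 hlam hμ1 hβs hβ hδ1 hδ2 hC2 hk2pos hC1pos hfit1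
    hfit2 w0 hw0
end

section
/- Set k4 = (δ1/(δ1 − 1))·(βb/βs) and C1' = (βs/δ1)·k4^{1−δ1} = (βs/δ1)^{δ1}·((δ1 − 1)/βb)^{δ1−1}. Then the smooth-fit conditions C1'·k4^{δ1} = βs·k4 − βb and C1'·δ1·k4^{δ1−1} = βs hold. Moreover, with k1 = (βs/βb)·(−δ2)/(1 − δ2), one has k1 < k4. -/
/-!
`δ1` and `δ2` are the roots of `δ² - aδ - c` with `a = 1 + (μ1 - μ2)/λ` and
`c = (ρ - μ1)/λ`; since `c > 0` and the polynomial is negative at `1`, `δ2 < 0 < 1 < δ1`.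
The smooth-fit identities say that `x ↦ (βs/δ1) k4^{1-δ1} x^{δ1}` touches the line
`x ↦ βs x - βb` at `x = k4`, which is rpow arithmetic; finally `k1 < 1 < k4`.
-/

open Real

lemma one_lt_half_add_sqrt {a b : ℝ} (h : 4 * (1 - a) < b) : 1 < (a + √(a ^ 2 + b)) / 2 := by
  have : 2 - a < √(a ^ 2 + b) := lt_sqrt_of_sq_lt (by nlinarith)
  linarith

lemma half_sub_sqrt_neg {a b : ℝ} (hb : 0 < b) : (a - √(a ^ 2 + b)) / 2 < 0 := by
  have : a < √(a ^ 2 + b) := lt_sqrt_of_sq_lt (by linarith)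
  linarith

lemma mul_neg_div_one_sub_lt_one {r d : ℝ} (hr : r ≤ 1) (hd : d ≤ 0) :
    r * -d / (1 - d) < 1 := by
  rw [div_lt_one (by linarith)]
  nlinarith

section SmoothFit

variable {δ βs βb k : ℝ}

lemma one_lt_smoothFit_threshold (hδ : 1 < δ) (hβs : 0 < βs) (hβ : βs < βb)
    (hk : k = δ / (δ - 1) * (βb / βs)) : 1 < k := by
  have hδ' : 1 < δ / (δ - 1) := by rw [lt_div_iff₀ (by linarith)]; linarith
  rw [hk]
  exact one_lt_mul hδ'.le ((one_lt_div hβs).mpr hβ)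

lemma smoothFit_coeff_eq (hδ : 1 < δ) (hβs : 0 < βs) (hβb : 0 < βb)
    (hk : k = δ / (δ - 1) * (βb / βs)) :
    βs / δ * k ^ (1 - δ) = (βs / δ) ^ δ * ((δ - 1) / βb) ^ (δ - 1) := by
  have hδ0 : 0 < δ := by linarith
  have hδ1 : 0 < δ - 1 := by linarith
  have hk_inv : k⁻¹ = βs / δ * ((δ - 1) / βb) := by rw [hk]; field_simp
  have hk0 : 0 ≤ k := by rw [hk]; positivity
  rw [show 1 - δ = -(δ - 1) by ring, rpow_neg hk0, ← inv_rpow hk0, hk_inv,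
    mul_rpow (by positivity) (by positivity), ← mul_assoc]
  congr 1
  have h := rpow_add (div_pos hβs hδ0) 1 (δ - 1)
  rwa [rpow_one, add_sub_cancel, eq_comm] at h

lemma smoothFit_value (hδ : 1 < δ) (hβs : 0 < βs) (hβb : 0 < βb)
    (hk : k = δ / (δ - 1) * (βb / βs)) :
    βs / δ * k ^ (1 - δ) * k ^ δ = βs * k - βb := by
  have hδ0 : 0 < δ := by linarith
  have hδ1 : 0 < δ - 1 := by linarith
  have hk0 : 0 < k := by rw [hk]; positivity
  rw [mul_assoc, ← rpow_add hk0, sub_add_cancel, rpow_one, hk]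
  field_simp
  ring

lemma smoothFit_slope (hδ : δ ≠ 0) (hk : 0 < k) :
    βs / δ * k ^ (1 - δ) * δ * k ^ (δ - 1) = βs := by
  have hpow : k ^ (1 - δ) * k ^ (δ - 1) = 1 := by
    rw [← rpow_add hk, show 1 - δ + (δ - 1) = 0 by ring, rpow_zero]
  calc βs / δ * k ^ (1 - δ) * δ * k ^ (δ - 1)
      = βs / δ * δ * (k ^ (1 - δ) * k ^ (δ - 1)) := by ring
    _ = βs := by rw [hpow, div_mul_cancel₀ _ hδ, mul_one]

end SmoothFit

/-- k4 = (δ1/(δ1−1))·(βb/βs) and C1' = (βs/δ1)·k4^{1−δ1}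
= (βs/δ1)^{δ1}·((δ1−1)/βb)^{δ1−1} satisfy the smooth-fit conditions
C1'·k4^{δ1} = βs·k4 − βb and C1'·δ1·k4^{δ1−1} = βs; moreover k1 < k4. -/
theorem stmt_16 (lam ρ μ1 μ2 δ1 δ2 βs βb k4 C1' k1 : ℝ)
    (hlam : 0 < lam) (hμ1 : μ1 < ρ) (hμ2 : μ2 < ρ)
    (hβs : 0 < βs) (hβ : βs < βb)
    (hδ1 : δ1 = (1 + (μ1 - μ2) / lam
      + Real.sqrt ((1 + (μ1 - μ2) / lam) ^ 2 + 4 * (ρ - μ1) / lam)) / 2)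
    (hδ2 : δ2 = (1 + (μ1 - μ2) / lam
      - Real.sqrt ((1 + (μ1 - μ2) / lam) ^ 2 + 4 * (ρ - μ1) / lam)) / 2)
    (hk4 : k4 = (δ1 / (δ1 - 1)) * (βb / βs))
    (hC1' : C1' = (βs / δ1) * k4 ^ (1 - δ1))
    (hk1 : k1 = (βs / βb) * (-δ2) / (1 - δ2)) :
    C1' = (βs / δ1) ^ δ1 * ((δ1 - 1) / βb) ^ (δ1 - 1) ∧
    C1' * k4 ^ δ1 = βs * k4 - βb ∧
    C1' * δ1 * k4 ^ (δ1 - 1) = βs ∧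
    k1 < k4 := by
  have hβb : 0 < βb := hβs.trans hβ
  have hδ1_gt : 1 < δ1 := hδ1 ▸ one_lt_half_add_sqrt (by
    rw [show 4 * (1 - (1 + (μ1 - μ2) / lam)) = 4 * (μ2 - μ1) / lam by ring]
    gcongr)
  have hδ2_neg : δ2 < 0 := hδ2 ▸ half_sub_sqrt_neg (by have := sub_pos.2 hμ1; positivity)
  have hk4_gt : 1 < k4 := one_lt_smoothFit_threshold hδ1_gt hβs hβ hk4
  have hk1_lt : k1 < 1 :=
    hk1 ▸ mul_neg_div_one_sub_lt_one (div_le_one_of_le₀ hβ.le hβb.le) hδ2_neg.le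
  subst hC1'
  exact ⟨smoothFit_coeff_eq hδ1_gt hβs hβb hk4, smoothFit_value hδ1_gt hβs hβb hk4,
    smoothFit_slope (by linarith) (by linarith), hk1_lt.trans hk4_gt⟩
end

section
/- Set k4 = (δ1/(δ1 − 1))·(βb/βs). Then for every y ≥ k4, one has (ρ − μ2)·βs·y − (ρ − μ1)·βb ≥ 0. Equivalently, k4 ≥ ((ρ−μ1)/(ρ−μ2))·(βb/βs), which holds because ((ρ−μ1)/(ρ−μ2))·(βb/βs) = ((−δ2)/(1 − δ2))·k4 ≤ k4. -/
/-! δ1 and δ2 are the roots of `x² - s x - c` with `s = 1 + (μ1 - μ2)/λ`, `c = (ρ - μ1)/λ`, so by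
Vieta `ρ - μ1 = -λ δ1 δ2` and `ρ - μ2 = λ (δ1 - 1)(1 - δ2)`. Positivity of the latter, together with
`δ2 ≤ δ1`, puts `δ2 < 1 < δ1`, and then `(ρ-μ1)/(ρ-μ2) · βb/βs = (-δ2)/(1-δ2) · k4` with a factor
`(-δ2)/(1-δ2) < 1` in front of `k4 > 0`. -/

open Real

section QuadraticRoots

variable {s c : ℝ}

lemma discrim_pos_of_sub_one_add_pos (h : 0 < s - 1 + c) : 0 < s ^ 2 + 4 * c := by
  nlinarith [sq_nonneg (s - 2)]

lemma quadratic_roots_mul_eq_neg (h : 0 ≤ s ^ 2 + 4 * c) :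
    (s + √(s ^ 2 + 4 * c)) / 2 * ((s - √(s ^ 2 + 4 * c)) / 2) = -c := by
  have hsq := sq_sqrt h
  linear_combination (-1 / 4 : ℝ) * hsq

end QuadraticRoots

lemma lt_one_lt_of_sub_one_mul_one_sub_pos {δ1 δ2 : ℝ} (hle : δ2 ≤ δ1)
    (h : 0 < (δ1 - 1) * (1 - δ2)) : δ2 < 1 ∧ 1 < δ1 := by
  rcases pos_and_pos_or_neg_and_neg_of_mul_pos h with ⟨h1, h2⟩ | ⟨h1, h2⟩
  · exact ⟨by linarith, by linarith⟩
  · linarith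

lemma nonneg_sub_of_div_mul_div_le {a b p q y : ℝ} (hb : 0 < b) (hq : 0 < q)
    (h : a / b * (p / q) ≤ y) : 0 ≤ b * q * y - a * p := by
  rw [div_mul_div_comm, div_le_iff₀ (mul_pos hb hq)] at h
  linarith

theorem stmt_18_general (lam ρ μ1 μ2 δ1 δ2 βs βb k4 : ℝ)
    (hlam : 0 < lam) (hμ2 : μ2 < ρ)
    (hβs : 0 < βs) (hβ : βs < βb)
    (hδ1 : δ1 = (1 + (μ1 - μ2) / lam
      + Real.sqrt ((1 + (μ1 - μ2) / lam) ^ 2 + 4 * (ρ - μ1) / lam)) / 2)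
    (hδ2 : δ2 = (1 + (μ1 - μ2) / lam
      - Real.sqrt ((1 + (μ1 - μ2) / lam) ^ 2 + 4 * (ρ - μ1) / lam)) / 2)
    (hk4 : k4 = (δ1 / (δ1 - 1)) * (βb / βs)) :
    (∀ y : ℝ, k4 ≤ y → 0 ≤ (ρ - μ2) * βs * y - (ρ - μ1) * βb) ∧
    (ρ - μ1) / (ρ - μ2) * (βb / βs) ≤ k4 ∧
    (ρ - μ1) / (ρ - μ2) * (βb / βs) = (-δ2) / (1 - δ2) * k4 := by
  set s := 1 + (μ1 - μ2) / lam
  set c := (ρ - μ1) / lam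
  rw [mul_div_assoc] at hδ1 hδ2
  have hdiff : s - 1 + c = (ρ - μ2) / lam := by ring
  have hdiff_pos : 0 < s - 1 + c := hdiff ▸ div_pos (by linarith) hlam
  have hprod : δ1 * δ2 = -c :=
    hδ1 ▸ hδ2 ▸ quadratic_roots_mul_eq_neg (discrim_pos_of_sub_one_add_pos hdiff_pos).le
  have hfac : (δ1 - 1) * (1 - δ2) = s - 1 + c := by
    linear_combination (-1 : ℝ) * hprod + hδ1 + hδ2
  obtain ⟨hδ2_lt, hδ1_gt⟩ := lt_one_lt_of_sub_one_mul_one_sub_pos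
    (by rw [hδ1, hδ2]; linarith [sqrt_nonneg (s ^ 2 + 4 * c)]) (hfac ▸ hdiff_pos)
  have hratio : (ρ - μ1) / (ρ - μ2) = -(δ1 * δ2) / ((δ1 - 1) * (1 - δ2)) := by
    rw [hprod, hfac, hdiff, neg_neg, div_div_div_cancel_right₀ hlam.ne']
  have hkey : (ρ - μ1) / (ρ - μ2) * (βb / βs) = (-δ2) / (1 - δ2) * k4 := by
    rw [hratio, hk4]
    field_simp [sub_ne_zero.2 hδ1_gt.ne', sub_ne_zero.2 hδ2_lt.ne]
  have hk4_pos : 0 < k4 :=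
    hk4 ▸ mul_pos (div_pos (by linarith) (by linarith)) (div_pos (by linarith) hβs)
  have hle : (ρ - μ1) / (ρ - μ2) * (βb / βs) ≤ k4 := by
    rw [hkey]
    exact mul_le_of_le_one_left hk4_pos.le ((div_le_one (by linarith)).2 (by linarith))
  exact ⟨fun y hy => nonneg_sub_of_div_mul_div_le (by linarith) hβs (hle.trans hy), hle, hkey⟩

/-- with k4 = (δ1/(δ1−1))·(βb/βs), for every y ≥ k4 one has
(ρ−μ2)·βs·y − (ρ−μ1)·βb ≥ 0; equivalently k4 ≥ ((ρ−μ1)/(ρ−μ2))·(βb/βs), which holds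
because ((ρ−μ1)/(ρ−μ2))·(βb/βs) = ((−δ2)/(1−δ2))·k4 ≤ k4. -/
theorem stmt_18 (lam ρ μ1 μ2 δ1 δ2 βs βb k4 : ℝ)
    (hlam : 0 < lam) (hμ1 : μ1 < ρ) (hμ2 : μ2 < ρ)
    (hβs : 0 < βs) (hβ : βs < βb)
    (hδ1 : δ1 = (1 + (μ1 - μ2) / lam
      + Real.sqrt ((1 + (μ1 - μ2) / lam) ^ 2 + 4 * (ρ - μ1) / lam)) / 2)
    (hδ2 : δ2 = (1 + (μ1 - μ2) / lam
      - Real.sqrt ((1 + (μ1 - μ2) / lam) ^ 2 + 4 * (ρ - μ1) / lam)) / 2)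
    (hk4 : k4 = (δ1 / (δ1 - 1)) * (βb / βs)) :
    (∀ y : ℝ, k4 ≤ y → 0 ≤ (ρ - μ2) * βs * y - (ρ - μ1) * βb) ∧
    (ρ - μ1) / (ρ - μ2) * (βb / βs) ≤ k4 ∧
    (ρ - μ1) / (ρ - μ2) * (βb / βs) = (-δ2) / (1 - δ2) * k4 :=
  stmt_18_general lam ρ μ1 μ2 δ1 δ2 βs βb k4 hlam hμ2 hβs hβ hδ1 hδ2 hk4
end
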